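/- arXiv:1906.12133 — 2 statements merged into one kernel-verified Lean document; each statement's English description precedes it below -/
import Mathlib

section
/- For any timed symbolic weighted automaton W over ℝ and a complete semiring 𝕊, and any piecewise-constant signal σ, there exists a finite set {(Z₁,s₁),…,(Z_m,s_m)} of pairs of a zone over the two clocks {t_begin,t_end} and a semiring value, such that Z₁,…,Z_m partition the domain {(t,t') | 0 ≤ t < t' ≤ |σ|}, and for every pair (t,t') with 0 ≤ t < t' ≤ |σ| there exist i ∈ {1,…,m} and ν ∈ Zᵢ with ν(t_begin)=t, ν(t_end)=t', and (M(σ,W))(t,t') = sᵢ. -/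
attribute [local instance] Classical.propDecidable

namespace QTPM

/-- Comparison operators `<, ≤, >, ≥` used in constraints, guards and zones. -/
inductive CmpOp : Type
  | lt | le | gt | ge

/-- Semantics of a comparison operator on reals. -/
def CmpOp.eval : CmpOp → ℝ → ℝ → Prop
  | .lt, a, b => a < b
  | .le, a, b => a ≤ b
  | .gt, a, b => a > b
  | .ge, a, b => a ≥ b

/-- A semiring `𝕊 = (S, ⊕, ⊗, e⊕, e⊗)`: `(S,⊕,e⊕)` a commutative monoid,
`(S,⊗,e⊗)` a monoid, `⊗` distributing over `⊕` on both sides, `e⊕` absorbing for `⊗`. -/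
class CSemiring (S : Type) : Type where
  add : S → S → S
  mul : S → S → S
  zero : S
  one : S
  add_assoc : ∀ a b c : S, add (add a b) c = add a (add b c)
  add_comm : ∀ a b : S, add a b = add b a
  add_zero : ∀ a : S, add a zero = a
  mul_assoc : ∀ a b c : S, mul (mul a b) c = mul a (mul b c)
  mul_one : ∀ a : S, mul a one = a
  one_mul : ∀ a : S, mul one a = a
  left_distrib : ∀ a b c : S, mul a (add b c) = add (mul a b) (mul a c)
  right_distrib : ∀ a b c : S, mul (add a b) c = add (mul a c) (mul b c)
  zero_mul : ∀ a : S, mul zero a = zero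
  mul_zero : ∀ a : S, mul a zero = zero

/-- A semiring is idempotent if `s ⊕ s = s` for every `s`. -/
def Idem (S : Type) [CSemiring S] : Prop := ∀ s : S, CSemiring.add s s = s

/-- The canonical order of a semiring: `s ⪯ s'` iff `s ⊕ s' = s'`. -/
def csLe {S : Type} [CSemiring S] (s s' : S) : Prop := CSemiring.add s s' = s'

/-- A complete semiring: every (possibly infinite) family has a sum `⊕`, extending the
binary sum, invariant under partitions of the index set, and over which `⊗` distributes
on both sides. -/
class CompleteCSemiring (S : Type) [CSemiring S] : Type 1 where
  iSum : {ι : Type} → (ι → S) → S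
  iSum_empty : ∀ f : Empty → S, iSum f = CSemiring.zero
  iSum_single : ∀ f : Unit → S, iSum f = f ()
  iSum_pair : ∀ f : Bool → S, iSum f = CSemiring.add (f true) (f false)
  iSum_partition : ∀ {ι κ : Type} (p : ι → κ) (f : ι → S),
    iSum f = iSum fun k : κ => iSum fun i : {i : ι // p i = k} => f i.1
  mul_iSum : ∀ {ι : Type} (s : S) (f : ι → S),
    CSemiring.mul s (iSum f) = iSum fun i => CSemiring.mul s (f i)
  iSum_mul : ∀ {ι : Type} (f : ι → S) (s : S),
    CSemiring.mul (iSum f) s = iSum fun i => CSemiring.mul (f i) s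

/-- A piecewise-constant signal `σ = a₁^{τ₁} ⋯ a_n^{τ_n}`: a finite list of
(value, duration) pairs with positive durations. -/
structure Signal (X : Type) : Type where
  entries : List ((X → ℝ) × ℝ)
  pos : ∀ e ∈ entries, (0:ℝ) < e.2

namespace Signal

variable {X : Type}

/-- A default entry, used as a fallback value for out-of-range indexing. -/
noncomputable def dflt (X : Type) : (X → ℝ) × ℝ := (fun _ => 0, 1)

/-- Prefix sums of the durations: `pref σ i = τ₁ + ⋯ + τᵢ`. -/
noncomputable def pref (σ : Signal X) (i : ℕ) : ℝ := ((σ.entries.take i).map Prod.snd).sum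

/-- The duration `|σ| = τ₁ + ⋯ + τ_n` of a signal. -/
noncomputable def dur (σ : Signal X) : ℝ := (σ.entries.map Prod.snd).sum

/-- The number `n` of entries of the signal. -/
def len (σ : Signal X) : ℕ := σ.entries.length

/-- The value `a_{i+1}` of the `i`-th entry (0-indexed). -/
noncomputable def val (σ : Signal X) (i : ℕ) : X → ℝ := (σ.entries.getD i (dflt X)).1

/-- The value `σ(t)` of the signal at time `t`: the value `a_k` where
`τ₁+⋯+τ_{k-1} ≤ t < τ₁+⋯+τ_k`. -/
noncomputable def valAt (σ : Signal X) (t : ℝ) : X → ℝ :=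
  σ.val ((List.range σ.len).findIdx fun i => decide (t < σ.pref (i+1)))

end Signal

/-- Stutter-free sequences: the elements of `(ℝ^X)^⊛` (no two equal consecutive values). -/
def StutterFree {V : Type} (l : List V) : Prop := l.Chain' (· ≠ ·)

/-- Absorbing concatenation `∘` of (stutter-free) sequences: concatenate and merge
equal consecutive elements. -/
noncomputable def absCat {V : Type} (l l' : List V) : List V :=
  List.destutter (· ≠ ·) (l ++ l')

/-- `Values(σ([t,t')))`: the stutter-free sequence of values of `σ` on the
interval `[t,t')`. -/
noncomputable def Signal.valuesOn {X : Type} (σ : Signal X) (t t' : ℝ) : List (X → ℝ) :=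
  List.destutter (· ≠ ·)
    (((List.range σ.len).filter fun i => decide (σ.pref i < t' ∧ t < σ.pref (i+1))).map σ.val)

/-- The restriction `σ([t,t'))` of a signal to the interval `[t,t')`. -/
noncomputable def Signal.restrict {X : Type} (σ : Signal X) (t t' : ℝ) : Signal X where
  entries := (List.range σ.len).filterMap fun i =>
    if h : max (σ.pref i) t < min (σ.pref (i+1)) t' then
      some (σ.val i, min (σ.pref (i+1)) t' - max (σ.pref i) t)
    else none
  pos := by
    intro e he
    rw [List.mem_filterMap] at he
    obtain ⟨i, -, hi⟩ := he
    by_cases h : max (σ.pref i) t < min (σ.pref (i+1)) t'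
    · rw [dif_pos h] at hi
      injection hi with h'
      subst h'
      simpa using sub_pos.mpr h
    · rw [dif_neg h] at hi
      exact absurd hi (by simp)

/-- The constant signal `a^t`. -/
noncomputable def constSignal {X : Type} (a : X → ℝ) (t : ℝ) : Signal X where
  entries := if h : (0:ℝ) < t then [(a, t)] else []
  pos := by
    intro e he
    by_cases h : (0:ℝ) < t
    · rw [dif_pos h] at he
      simp only [List.mem_singleton] at he
      subst he
      exact h
    · rw [dif_neg h] at he
      simp at he

/-- Clock guards: finite conjunctions of `c ⋈ d` with `d ∈ ℤ≥0`. -/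
abbrev Guard (C : Type) : Type := List (C × CmpOp × ℕ)

/-- Constraints over the variables `X`: finite conjunctions of `x ⋈ d` with `d ∈ ℝ`. -/
abbrev VarConstraint (X : Type) : Type := List (X × CmpOp × ℝ)

/-- A timed symbolic automaton (TSA) over `ℝ`, with locations `L` and clocks `C`. -/
structure TSA (X L C : Type) : Type where
  L₀ : Set L
  LF : Set L
  Δ : Set (L × Guard C × Set C × L)
  Δ_finite : Δ.Finite
  Λ : L → VarConstraint X

/-- A timed symbolic weighted automaton (TSWA) over `ℝ` and a complete semiring `S`:
a TSA together with a cost function `κ`. -/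
structure TSWA (X L C S : Type) [CSemiring S] [CompleteCSemiring S]
    extends TSA X L C : Type where
  κ : VarConstraint X → List (X → ℝ) → S

/-- Satisfaction `ν ⊨ g` of a clock guard. -/
def guardSat {C : Type} (ν : C → ℝ) (g : Guard C) : Prop :=
  ∀ p ∈ g, p.2.1.eval (ν p.1) (p.2.2 : ℝ)

/-- The reset `ν[ρ := 0]` of a clock valuation. -/
noncomputable def resetVal {C : Type} (ν : C → ℝ) (ρ : Set C) : C → ℝ :=
  fun c => if c ∈ ρ then 0 else ν c

/-- States of the WTTS: `(l, ν, t, ā)`. -/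
abbrev WState (X L C : Type) : Type := L × (C → ℝ) × ℝ × List (X → ℝ)

/-- The state space `Q` of the WTTS of `σ` and a TSWA. -/
def wttsQ {X L C : Type} (σ : Signal X) : Set (WState X L C) :=
  {q | (∀ c, 0 ≤ q.2.1 c) ∧ 0 ≤ q.2.2.1 ∧ q.2.2.1 ≤ σ.dur ∧ StutterFree q.2.2.2}

/-- The initial states `Q₀ = {(l₀, 0⃗, 0, ε) | l₀ ∈ L₀}` of the WTTS. -/
def wttsQ0 {X L C : Type} (A : TSA X L C) : Set (WState X L C) :=
  {q | q.1 ∈ A.L₀ ∧ q.2.1 = (fun _ => 0) ∧ q.2.2.1 = 0 ∧ q.2.2.2 = []}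

/-- The accepting states `Q_F = {(l_F, ν, |σ|, ε) | l_F ∈ L_F}` of the WTTS. -/
def wttsQF {X L C : Type} (σ : Signal X) (A : TSA X L C) : Set (WState X L C) :=
  {q | q.1 ∈ A.LF ∧ (∀ c, 0 ≤ q.2.1 c) ∧ q.2.2.1 = σ.dur ∧ q.2.2.2 = []}

/-- The transition relation `→` of the WTTS of `σ` and (the TSA of) a TSWA:
either a discrete transition of the TSA, or time elapse. -/
def wttsStep {X L C : Type} (σ : Signal X) (A : TSA X L C)
    (q q' : WState X L C) : Prop :=
  q ∈ wttsQ σ ∧ q' ∈ wttsQ σ ∧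
  ((∃ g ρ, (q.1, g, ρ, q'.1) ∈ A.Δ ∧ guardSat q.2.1 g ∧ q'.2.1 = resetVal q.2.1 ρ ∧
      q'.2.2.1 = q.2.2.1 ∧ q.2.2.2 ≠ [] ∧ q'.2.2.2 = []) ∨
   (q.1 = q'.1 ∧ ∃ τ : ℝ, 0 < τ ∧ q'.2.1 = (fun c => q.2.1 c + τ) ∧
      q'.2.2.1 = q.2.2.1 + τ ∧
      q'.2.2.2 = absCat q.2.2.2 (σ.valuesOn q.2.2.1 (q.2.2.1 + τ))))

/-- The weight of a WTTS transition: `κ(Λ(l), ā)` if `ā' = ε`, and `e⊗` otherwise. -/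
noncomputable def wttsWeight {X L C S : Type} [CSemiring S] [CompleteCSemiring S]
    (W : TSWA X L C S) (q q' : WState X L C) : S :=
  if q'.2.2.2 = [] then W.κ (W.Λ q.1) q.2.2.2 else CSemiring.one

/-- A path of a transition system: a finite sequence of states related by
consecutive transitions. -/
def IsPath {Q : Type} (step : Q → Q → Prop) (π : List Q) : Prop := π.Chain' step

/-- The path value: the `⊗`-product of the weights of the transitions of a path. -/
noncomputable def pathVal {Q S : Type} [CSemiring S] [CompleteCSemiring S]
    (w : Q → Q → S) : List Q → S
  | [] => CSemiring.one
  | [_] => CSemiring.one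
  | q :: q' :: r => CSemiring.mul (w q q') (pathVal w (q' :: r))

/-- The set of paths from a state of `A` to a state of `B`. -/
def PathsBetween {Q : Type} (step : Q → Q → Prop) (A B : Set Q) : Set (List Q) :=
  {π | IsPath step π ∧ (∃ a ∈ A, π.head? = some a) ∧ (∃ b ∈ B, π.getLast? = some b)}

/-- The shortest distance from `A` to `B`: the `⊕`-sum, over all paths from `A` to `B`,
of the `⊗`-product of the transition weights. -/
noncomputable def sDist {Q S : Type} [CSemiring S] [CompleteCSemiring S]
    (step : Q → Q → Prop) (w : Q → Q → S) (A B : Set Q) : S :=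
  CompleteCSemiring.iSum fun π : ↥(PathsBetween step A B) => pathVal w π.1

/-- The trace value `α(S)` of the WTTS `S` of `σ` and `W`: the shortest distance from
the initial states to the accepting states, i.e. `⊕_{π ∈ ARuns(S)} μ(π)`. -/
noncomputable def traceValue {X L C S : Type} [CSemiring S] [CompleteCSemiring S]
    (σ : Signal X) (W : TSWA X L C S) : S :=
  sDist (wttsStep σ W.toTSA) (wttsWeight W) (wttsQ0 W.toTSA) (wttsQF σ W.toTSA)

/-- The clocks `C ⊔ {T}`: `none` is the fresh clock `T` tracking absolute time. -/
abbrev ClockT (C : Type) : Type := Option C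

/-- Symbolic states of the WSTTS: `(l, Z, ā)`. -/
abbrev SymState (X L C : Type) : Type := L × Set (ClockT C → ℝ) × List (X → ℝ)

/-- A zone over the clock set `C'`: a set of clock valuations defined by a finite
conjunction of constraints `c ⋈ d` and `c − c' ⋈ d`. -/
def IsZone {C' : Type} (Z : Set (C' → ℝ)) : Prop :=
  ∃ atoms : List ((C' × CmpOp × ℝ) ⊕ (C' × C' × CmpOp × ℝ)),
    Z = {ν | ∀ a ∈ atoms,
      match a with
      | .inl p => p.2.1.eval (ν p.1) p.2.2
      | .inr p => p.2.2.1.eval (ν p.1 - ν p.2.1) p.2.2.2}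

/-- The symbolic state space `Q^sym` of the WSTTS of `σ` and a TSWA. -/
def symQ {X L C : Type} (σ : Signal X) : Set (SymState X L C) :=
  {q | IsZone q.2.1 ∧ q.2.1.Nonempty ∧ (∀ ν ∈ q.2.1, ν none ≤ σ.dur) ∧
    StutterFree q.2.2 ∧
    (q.2.2 = [] ∨ ∀ ν ∈ q.2.1, absCat q.2.2 [σ.valAt (ν none)] = q.2.2)}

/-- The all-zero clock valuation over `C ⊔ {T}`. -/
noncomputable def zeroValT {C : Type} : ClockT C → ℝ := fun _ => 0

/-- The initial symbolic states `Q₀^sym = {(l₀, {0⃗}, ε) | l₀ ∈ L₀}`. -/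
def symQ0 {X L C : Type} (A : TSA X L C) : Set (SymState X L C) :=
  {q | q.1 ∈ A.L₀ ∧ q.2.1 = {zeroValT} ∧ q.2.2 = []}

/-- The accepting symbolic states
`Q_F^sym = {(l_F, Z, ε) ∈ Q^sym | ∃ν ∈ Z, ν(T) = |σ|}`. -/
def symQF {X L C : Type} (σ : Signal X) (A : TSA X L C) : Set (SymState X L C) :=
  {q | q ∈ symQ σ ∧ q.1 ∈ A.LF ∧ q.2.2 = [] ∧ ∃ ν ∈ q.2.1, ν none = σ.dur}

/-- The reset `ν[ρ := 0]` of a valuation over `C ⊔ {T}` (the clock `T` is never reset). -/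
noncomputable def symResetVal {C : Type} (ν : ClockT C → ℝ) (ρ : Set C) : ClockT C → ℝ :=
  fun c => match c with
    | none => ν none
    | some c' => if c' ∈ ρ then 0 else ν (some c')

/-- The up-closure `{ν + τ | ν ∈ Z, τ > 0}` of a zone under time elapse. -/
def upClosure {C : Type} (Z : Set (ClockT C → ℝ)) : Set (ClockT C → ℝ) :=
  {ν' | ∃ ν ∈ Z, ∃ τ : ℝ, 0 < τ ∧ ν' = fun c => ν c + τ}

/-- The transition relation `→^sym` of the WSTTS of `σ` and (the TSA of) a TSWA:
a discrete transition of the TSA, a punctual time elapse, or a non-punctual time elapse. -/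
def symStep {X L C : Type} (σ : Signal X) (A : TSA X L C)
    (q q' : SymState X L C) : Prop :=
  q ∈ symQ σ ∧ q' ∈ symQ σ ∧
  ((∃ g ρ, (q.1, g, ρ, q'.1) ∈ A.Δ ∧
      q'.2.1 = {ν' | ∃ ν ∈ q.2.1, guardSat (fun c => ν (some c)) g ∧ ν' = symResetVal ν ρ} ∧
      q.2.2 ≠ [] ∧ q'.2.2 = []) ∨
   (q.1 = q'.1 ∧
      (∃ ν ∈ q.2.1, ∃ ν' ∈ q'.2.1, q'.2.2 = absCat q.2.2 (σ.valuesOn (ν none) (ν' none))) ∧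
      (∃ i, 1 ≤ i ∧ i ≤ σ.len ∧
        (q'.2.1 = upClosure q.2.1 ∩ {ν | ν none = σ.pref i} ∨
         q'.2.1 = upClosure q.2.1 ∩ {ν | σ.pref (i-1) < ν none ∧ ν none < σ.pref i}))))

/-- The weight of a WSTTS transition: `κ(Λ(l), ā)` if `ā' = ε`, and `e⊗` otherwise. -/
noncomputable def symWeight {X L C S : Type} [CSemiring S] [CompleteCSemiring S]
    (W : TSWA X L C S) (q q' : SymState X L C) : S :=
  if q'.2.2 = [] then W.κ (W.Λ q.1) q.2.2 else CSemiring.one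

/-- The symbolic trace value `α^sym(S^sym)`: the shortest distance from the initial
symbolic states to the accepting symbolic states, i.e. `⊕_{π ∈ ARuns(S^sym)} μ^sym(π)`. -/
noncomputable def symTraceValue {X L C S : Type} [CSemiring S] [CompleteCSemiring S]
    (σ : Signal X) (W : TSWA X L C S) : S :=
  sDist (symStep σ W.toTSA) (symWeight W) (symQ0 W.toTSA) (symQF σ W.toTSA)

/-- `Reach`: the initial states together with all states reachable from them. -/
def reach {Q : Type} (step : Q → Q → Prop) (init : Set Q) : Set Q :=
  {q | ∃ q0 ∈ init, Relation.ReflTransGen step q0 q}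

/-- Tuples `(l, Z, ā, s)` occurring in intermediate weights. -/
abbrev WTuple (X L C S : Type) : Type := L × Set (ClockT C → ℝ) × List (X → ℝ) × S

/-- The increment function `incr(a,t)`: maps a set `w` of tuples `(l,Z,ā,s)` to the set
of tuples `(l',Z',ā',s')` such that every `ν' ∈ Z'` satisfies `ν'(T) = t` and
`s' = ⊕_{(l,Z,ā,s)∈w} s ⊗ Dist({(l,Z,ā)},{(l',Z',ā')})` computed in the WSTTS of the
constant signal `a^t` and `W`. -/
noncomputable def incr {X L C S : Type} [CSemiring S] [CompleteCSemiring S]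
    (W : TSWA X L C S) (a : X → ℝ) (t : ℝ)
    (w : Set (WTuple X L C S)) : Set (WTuple X L C S) :=
  {p | IsZone p.2.1 ∧ StutterFree p.2.2.1 ∧ (∀ ν ∈ p.2.1, ν none = t) ∧
    p.2.2.2 = CompleteCSemiring.iSum fun q : ↥w =>
      CSemiring.mul q.1.2.2.2
        (sDist (symStep (constSignal a t) W.toTSA) (symWeight W)
          ({(q.1.1, q.1.2.1, q.1.2.2.1)} : Set (SymState X L C))
          ({(p.1, p.2.1, p.2.2.1)} : Set (SymState X L C)))}

/-- The intermediate weight `weight_i = (incr(a_i,T_i) ∘ ⋯ ∘ incr(a₁,T₁))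
({(l₀,{0⃗},ε,e⊗) | l₀ ∈ L₀})`, where `T_j = τ₁ + ⋯ + τ_j`. -/
noncomputable def weightSeq {X L C S : Type} [CSemiring S] [CompleteCSemiring S]
    (σ : Signal X) (W : TSWA X L C S) : ℕ → Set (WTuple X L C S)
  | 0 => {p | p.1 ∈ W.L₀ ∧ p.2.1 = {zeroValT} ∧ p.2.2.1 = [] ∧ p.2.2.2 = CSemiring.one}
  | i + 1 => incr W (σ.val i) (σ.pref (i+1)) (weightSeq σ W i)

/-- The extension of a clock valuation over `C` to `C ⊔ {T}`, assigning `t` to `T`. -/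
def extT {C : Type} (ν : C → ℝ) (t : ℝ) : ClockT C → ℝ :=
  fun c => match c with
    | none => t
    | some c' => ν c'

/-- The restriction `ν|_C` of a clock valuation over `C ⊔ {T}` to `C`. -/
def restrC {C : Type} (ν : ClockT C → ℝ) : C → ℝ := fun c => ν (some c)

/-- The extension of a clock valuation over `C ⊔ {T}` to `C ⊔ {T, 0}`, where the
reference clock `0` (encoded as `none`) has constant value `0`. -/
def extRef {C : Type} (ν : ClockT C → ℝ) : Option (ClockT C) → ℝ :=
  fun c => match c with
    | none => 0
    | some c' => ν c'

/-- The canonical bound `d_{Z,c,c'}` of a zone: the least constant bounding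
`ν(c) − ν(c')` over `Z` (with `∞ = ⊤` when unbounded). -/
noncomputable def zoneBound {C : Type} (Z : Set (ClockT C → ℝ))
    (c c' : Option (ClockT C)) : EReal :=
  sSup ((fun ν => ((extRef ν c - extRef ν c' : ℝ) : EReal)) '' Z)

end QTPM

/-!
Two pairs `t < t'` and `u < u'` lying in the same cell are related by a time warp: an order
automorphism `φ` of `ℝ` commuting with integer translations, with `φ (pᵢ - t) = pᵢ - u` for every
breakpoint `pᵢ` of `σ` and `φ (t' - t) = u' - u`. It exists because the cell records how every
difference of two of the instants `t, t', pᵢ` compares with the integers (up to `⌈|σ|⌉ + 1`, beyond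
which nothing can change), so the fractional parts of the points `pᵢ - t, t' - t` are ordered
exactly like those of `pᵢ - u, u' - u`, and a piecewise-linear interpolation between them does the
job. Applied to absolute time, and to each clock through the instant of its last reset, `φ` is an
isomorphism between the weighted timed transition systems of `σ([t,t'))` and `σ([u,u'))`: guards
only compare clock values with integers, and weights only see locations and value sequences. So
`M(σ,W)` is constant on each cell, and the cells are zones because each comparison involved is a
constraint `c ⋈ d` or `c - c' ⋈ d` on the clocks `t_begin, t_end`.
-/

namespace QTPM

lemma cmp_eq_cmp_of_sub_eq_sub {a b a' b' : ℝ} (h : a - b = a' - b') : cmp a b = cmp a' b' := by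
  rw [← cmp_sub_zero, h, cmp_sub_zero]

lemma CmpOp.eval_iff_of_cmp_eq {a b c d : ℝ} (h : cmp a b = cmp c d) (op : CmpOp) :
    op.eval a b ↔ op.eval c d := by
  cases op
  · simp only [CmpOp.eval, ← cmp_eq_lt_iff, h]
  · simp only [CmpOp.eval, ← not_lt, ← cmp_eq_gt_iff, h]
  · simp only [CmpOp.eval, gt_iff_lt, ← cmp_eq_gt_iff, h]
  · simp only [CmpOp.eval, ge_iff_le, ← not_lt, ← cmp_eq_lt_iff, h]

namespace CompleteCSemiring

variable {S : Type} [CSemiring S] [CompleteCSemiring S]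

lemma iSum_subtype_unit (P : Prop) (hP : P) (c : S) :
    iSum (fun _ : {_u : Unit // P} => c) = c := by
  -- the axioms only evaluate sums over `Unit` and over fibres `{i // p i = k}`
  have hpred : (fun _ : Unit => P) = fun u => id u = () :=
    funext fun _ => propext ⟨fun _ => rfl, fun _ => hP⟩
  have h := iSum_partition (p := (id : Unit → Unit)) (f := fun _ => c)
  rw [iSum_single, iSum_single (f := fun k : Unit => _)] at h
  rw [show {_u : Unit // P} = {u : Unit // id u = ()} from congrArg Subtype hpred]
  exact h.symm

lemma iSum_eq_of_forall_eq {T : Type} (t₀ : T) (h : ∀ t, t = t₀) (g : T → S) :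
    iSum g = g t₀ := by
  have hpart := iSum_partition (p := fun _ : Unit => t₀) (f := fun _ => g t₀)
  rw [iSum_single] at hpart
  rw [hpart]
  congr 1
  funext t
  rw [iSum_subtype_unit _ (h t).symm, h t]

lemma iSum_comp_equiv {ι κ : Type} (e : ι ≃ κ) (f : κ → S) :
    iSum (fun i => f (e i)) = iSum f := by
  rw [iSum_partition (p := e)]
  congr 1
  funext k
  refine (iSum_eq_of_forall_eq ⟨e.symm k, e.apply_symm_apply k⟩ (fun i => ?_) _).trans ?_
  · exact Subtype.ext (e.injective (i.2.trans (e.apply_symm_apply k).symm))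
  · simp

end CompleteCSemiring

section ShortestDistance

variable {S : Type} [CSemiring S] [CompleteCSemiring S]

lemma pathVal_map {Q Q' : Type} (f : Q → Q') {w : Q → Q → S} {w' : Q' → Q' → S}
    (hw : ∀ q q', w' (f q) (f q') = w q q') :
    ∀ π : List Q, pathVal w' (π.map f) = pathVal w π
  | [] => rfl
  | [_] => rfl
  | q :: q' :: r => by
    have ih := pathVal_map f hw (q' :: r)
    rw [List.map_cons] at ih
    rw [List.map_cons, List.map_cons, pathVal, pathVal, hw, ih]

lemma mem_pathsBetween_map_iff {Q Q' : Type} (f : Q → Q') {step : Q → Q → Prop}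
    {step' : Q' → Q' → Prop} {A B : Set Q} {A' B' : Set Q'}
    (hstep : ∀ q q', step' (f q) (f q') ↔ step q q') (hA : ∀ q, f q ∈ A' ↔ q ∈ A)
    (hB : ∀ q, f q ∈ B' ↔ q ∈ B) (π : List Q) :
    π.map f ∈ PathsBetween step' A' B' ↔ π ∈ PathsBetween step A B := by
  have hrel : (fun q q' => step' (f q) (f q')) = step := funext₂ fun q q' => propext (hstep q q')
  show (List.IsChain _ _ ∧ _ ∧ _) ↔ (List.IsChain _ _ ∧ _ ∧ _)
  rw [List.isChain_map, hrel, List.head?_map, List.getLast?_map]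
  cases π.head? <;> cases π.getLast? <;> simp [hA, hB]

lemma sDist_congr_equiv {Q Q' : Type} (f : Q ≃ Q') {step : Q → Q → Prop}
    {step' : Q' → Q' → Prop} {w : Q → Q → S} {w' : Q' → Q' → S} {A B : Set Q} {A' B' : Set Q'}
    (hstep : ∀ {q q'}, step q q' → step' (f q) (f q'))
    (hstep' : ∀ {q q'}, step' q q' → step (f.symm q) (f.symm q'))
    (hA : ∀ {q}, q ∈ A → f q ∈ A') (hA' : ∀ {q}, q ∈ A' → f.symm q ∈ A)
    (hB : ∀ {q}, q ∈ B → f q ∈ B') (hB' : ∀ {q}, q ∈ B' → f.symm q ∈ B)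
    (hw : ∀ q q', w' (f q) (f q') = w q q') :
    sDist step w A B = sDist step' w' A' B' := by
  have hmem := mem_pathsBetween_map_iff f
    (fun q q' => ⟨fun h => by simpa using hstep' h, hstep⟩)
    (fun q => ⟨fun h => by simpa using hA' h, hA⟩) (fun q => ⟨fun h => by simpa using hB' h, hB⟩)
  unfold sDist
  rw [← CompleteCSemiring.iSum_comp_equiv ((Equiv.listEquivOfEquiv f).subtypeEquiv
    fun π => (hmem π).symm)]
  exact congrArg _ (funext fun π => (pathVal_map f hw π.1).symm)

end ShortestDistance

def BothLt (p q : ℝ × ℝ) : Prop := p.1 < q.1 ∧ p.2 < q.2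

noncomputable def pwLinear : List (ℝ × ℝ) → ℝ → ℝ
  | [] => fun x => x
  | [p] => fun x => x - p.1 + p.2
  | p :: q :: l => fun x =>
      if x ≤ p.1 then x - p.1 + p.2
      else if x ≤ q.1 then p.2 + (x - p.1) * ((q.2 - p.2) / (q.1 - p.1))
      else pwLinear (q :: l) x

lemma pwLinear_apply_fst :
    ∀ {l : List (ℝ × ℝ)}, l.Pairwise BothLt → ∀ p ∈ l, pwLinear l p.1 = p.2
  | [], _, p, hp => absurd hp List.not_mem_nil
  | [_], _, r, hr => by
      rcases List.mem_singleton.mp hr with rfl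
      simp [pwLinear]
  | p :: q :: l, hl, r, hr => by
      obtain ⟨hp, hl'⟩ := List.pairwise_cons.mp hl
      rcases List.mem_cons.mp hr with rfl | hr'
      · simp [pwLinear]
      have hpr := hp r hr'
      have h1 : ¬ r.1 ≤ p.1 := not_le.mpr hpr.1
      rcases List.mem_cons.mp hr' with rfl | hr''
      · have h2 : r.1 - p.1 ≠ 0 := sub_ne_zero.mpr hpr.1.ne'
        simp only [pwLinear, if_neg h1, if_pos le_rfl]
        field_simp
        ring
      · have h2 : ¬ r.1 ≤ q.1 := not_le.mpr ((List.pairwise_cons.mp hl').1 r hr'').1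
        simp only [pwLinear, if_neg h1, if_neg h2]
        exact pwLinear_apply_fst hl' r hr'

lemma pwLinear_strictMono : ∀ {l : List (ℝ × ℝ)}, l.Pairwise BothLt → StrictMono (pwLinear l)
  | [], _ => strictMono_id
  | [_], _ => fun x y h => by simp only [pwLinear]; linarith
  | p :: q :: l, hl => by
      obtain ⟨hp, hl'⟩ := List.pairwise_cons.mp hl
      obtain ⟨hpq1, hpq2⟩ := hp q List.mem_cons_self
      have ih := pwLinear_strictMono hl'
      have hq : pwLinear (q :: l) q.1 = q.2 := pwLinear_apply_fst hl' q List.mem_cons_self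
      set s := (q.2 - p.2) / (q.1 - p.1) with hs_def
      have hs : 0 < s := div_pos (sub_pos.mpr hpq2) (sub_pos.mpr hpq1)
      have hsq : (q.1 - p.1) * s = q.2 - p.2 := mul_div_cancel₀ _ (sub_ne_zero.mpr hpq1.ne')
      have hright : ∀ y, q.1 < y → q.2 < pwLinear (q :: l) y := fun y hy => hq ▸ ih hy
      intro x y hxy
      simp only [pwLinear, ← hs_def]
      split_ifs
      all_goals first
        | exact ih hxy
        | linarith
        | nlinarith
        | nlinarith [hright y (by linarith)]

lemma pwLinear_swap_apply :
    ∀ {l : List (ℝ × ℝ)}, l.Pairwise BothLt → ∀ x, pwLinear (l.map Prod.swap) (pwLinear l x) = x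
  | [], _, _ => rfl
  | [_], _, _ => by simp [pwLinear]
  | p :: q :: l, hl, x => by
      obtain ⟨hp, hl'⟩ := List.pairwise_cons.mp hl
      obtain ⟨hpq1, hpq2⟩ := hp q List.mem_cons_self
      have ih := pwLinear_swap_apply hl' x
      have hq : pwLinear (q :: l) q.1 = q.2 := pwLinear_apply_fst hl' q List.mem_cons_self
      have hright : q.1 < x → q.2 < pwLinear (q :: l) x := fun hx => hq ▸ pwLinear_strictMono hl' hx
      set s := (q.2 - p.2) / (q.1 - p.1) with hs_def
      have hs : 0 < s := div_pos (sub_pos.mpr hpq2) (sub_pos.mpr hpq1)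
      have hsq : (q.1 - p.1) * s = q.2 - p.2 := mul_div_cancel₀ _ (sub_ne_zero.mpr hpq1.ne')
      have hinv : (q.1 - p.1) / (q.2 - p.2) = s⁻¹ := by rw [hs_def, inv_div]
      simp only [List.map_cons, pwLinear, Prod.fst_swap, Prod.snd_swap, ← hs_def, hinv]
      simp only [List.map_cons] at ih
      split_ifs
      all_goals first
        | exact ih
        | linarith
        | nlinarith
        | nlinarith [hright (by linarith)]
        | (field_simp; ring1)

noncomputable def warp (ctrl : List (ℝ × ℝ)) (x : ℝ) : ℝ :=
  ⌊x⌋ + pwLinear ctrl (Int.fract x)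

lemma warp_add_intCast (ctrl : List (ℝ × ℝ)) (x : ℝ) (k : ℤ) :
    warp ctrl (x + k) = warp ctrl x + k := by
  rw [warp, warp, Int.floor_add_intCast, Int.fract_add_intCast]
  push_cast
  ring

section Warp

variable {ctrl : List (ℝ × ℝ)} (hctrl : ctrl.Pairwise BothLt)

include hctrl

lemma warp_eq_of_mem {w w' : ℝ} (hfloor : ⌊w⌋ = ⌊w'⌋) (hmem : (Int.fract w, Int.fract w') ∈ ctrl) :
    warp ctrl w = w' := by
  rw [warp, pwLinear_apply_fst hctrl _ hmem, hfloor, Int.floor_add_fract]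

variable (h0 : ((0 : ℝ), (0 : ℝ)) ∈ ctrl) (h1 : ((1 : ℝ), (1 : ℝ)) ∈ ctrl)

include h0 h1

lemma pwLinear_fract_mem_Ico (x : ℝ) : pwLinear ctrl (Int.fract x) ∈ Set.Ico 0 1 := by
  have hmono := pwLinear_strictMono hctrl
  have hzero : pwLinear ctrl 0 = 0 := pwLinear_apply_fst hctrl _ h0
  have hone : pwLinear ctrl 1 = 1 := pwLinear_apply_fst hctrl _ h1
  exact ⟨hzero ▸ hmono.monotone (Int.fract_nonneg x), hone ▸ hmono (Int.fract_lt_one x)⟩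

lemma floor_warp (x : ℝ) : ⌊warp ctrl x⌋ = ⌊x⌋ := by
  rw [warp, Int.floor_intCast_add, Int.floor_eq_zero_iff.mpr (pwLinear_fract_mem_Ico hctrl h0 h1 x),
    add_zero]

lemma fract_warp (x : ℝ) : Int.fract (warp ctrl x) = pwLinear ctrl (Int.fract x) := by
  rw [Int.fract, floor_warp hctrl h0 h1, warp, add_sub_cancel_left]

lemma warp_strictMono : StrictMono (warp ctrl) := by
  intro x y hxy
  have hx := pwLinear_fract_mem_Ico hctrl h0 h1 x
  have hy := pwLinear_fract_mem_Ico hctrl h0 h1 y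
  rcases (Int.floor_le_floor hxy.le).lt_or_eq with hfl | hfl
  · have : (⌊x⌋ : ℝ) + 1 ≤ ⌊y⌋ := by exact_mod_cast hfl
    rw [warp, warp]
    linarith [hx.2, hy.1]
  · have hfract : Int.fract x < Int.fract y := by
      rw [Int.fract, Int.fract, hfl]
      linarith
    rw [warp, warp, hfl]
    linarith [pwLinear_strictMono hctrl hfract]

lemma warp_swap_warp (x : ℝ) : warp (ctrl.map Prod.swap) (warp ctrl x) = x := by
  rw [warp, floor_warp hctrl h0 h1, fract_warp hctrl h0 h1, pwLinear_swap_apply hctrl,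
    Int.floor_add_fract]

end Warp

lemma pairwise_bothLt_swap {ctrl : List (ℝ × ℝ)} (hctrl : ctrl.Pairwise BothLt) :
    (ctrl.map Prod.swap).Pairwise BothLt :=
  List.pairwise_map.mpr (hctrl.imp fun h => ⟨h.2, h.1⟩)

lemma exists_pairwise_bothLt_of_cmp_eq (l : List (ℝ × ℝ))
    (h : ∀ p ∈ l, ∀ q ∈ l, cmp p.1 q.1 = cmp p.2 q.2) :
    ∃ ctrl : List (ℝ × ℝ), ctrl.Pairwise BothLt ∧ ∀ p, p ∈ ctrl ↔ p ∈ l := by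
  set ctrl := l.dedup.mergeSort (fun p q => decide (p.1 ≤ q.1))
  have hperm : ctrl.Perm l.dedup := List.mergeSort_perm _ _
  have hmem : ∀ p, p ∈ ctrl ↔ p ∈ l := fun p => hperm.mem_iff.trans List.mem_dedup
  have hsorted : ctrl.Pairwise (fun p q => p.1 ≤ q.1) := by
    refine (List.pairwise_mergeSort (fun a b c hab hbc => ?_) (fun a b => ?_) _).imp
      (fun hab => of_decide_eq_true hab)
    · simp only [decide_eq_true_eq] at hab hbc ⊢
      exact hab.trans hbc
    · simpa using le_total a.1 b.1
  refine ⟨ctrl, ?_, hmem⟩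
  refine ((hsorted.and (hperm.nodup_iff.mpr (List.nodup_dedup l))).imp_of_mem ?_)
  rintro p q hp hq ⟨hle, hne⟩
  have hpq := h p ((hmem p).mp hp) q ((hmem q).mp hq)
  rcases hle.lt_or_eq with hlt | heq
  · exact ⟨hlt, by rwa [(cmp_eq_lt_iff _ _).mpr hlt, eq_comm, cmp_eq_lt_iff] at hpq⟩
  · rw [(cmp_eq_eq_iff _ _).mpr heq, eq_comm, cmp_eq_eq_iff] at hpq
    exact absurd (Prod.ext heq hpq) hne

lemma floor_eq_floor_of_cmp_intCast {x y : ℝ} (h : ∀ z : ℤ, cmp x z = cmp y z) : ⌊x⌋ = ⌊y⌋ := by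
  have hle : ∀ z : ℤ, (z : ℝ) ≤ x ↔ (z : ℝ) ≤ y := fun z => by
    rw [← not_lt, ← not_lt, ← cmp_eq_lt_iff, ← cmp_eq_lt_iff, h]
  exact le_antisymm (Int.le_floor.mpr ((hle _).mp (Int.floor_le x)))
    (Int.le_floor.mpr ((hle _).mpr (Int.floor_le y)))

lemma cmp_fract_fract (x y : ℝ) :
    cmp (Int.fract x) (Int.fract y) = cmp (x - y) ((⌊x⌋ - ⌊y⌋ : ℤ) : ℝ) := by
  rw [← cmp_sub_zero, ← cmp_sub_zero (x - y), ← Int.self_sub_floor, ← Int.self_sub_floor]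
  push_cast
  ring_nf

theorem exists_orderIso_of_cmp_sub_intCast (l : List (ℝ × ℝ)) (h0 : ((0 : ℝ), (0 : ℝ)) ∈ l)
    (h : ∀ p ∈ l, ∀ q ∈ l, ∀ z : ℤ, cmp (p.1 - q.1) z = cmp (p.2 - q.2) z) :
    ∃ φ : ℝ ≃o ℝ, (∀ x (k : ℤ), φ (x + k) = φ x + k) ∧ ∀ p ∈ l, φ p.1 = p.2 := by
  have hfloor : ∀ p ∈ l, ⌊p.1⌋ = ⌊p.2⌋ := fun p hp =>
    floor_eq_floor_of_cmp_intCast fun z => by simpa using h p hp _ h0 z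
  set fracts := ((1 : ℝ), (1 : ℝ)) :: l.map fun p => (Int.fract p.1, Int.fract p.2)
  have hone : ∀ x : ℝ, cmp 1 (Int.fract x) = .gt := fun x =>
    (cmp_eq_gt_iff _ _).mpr (Int.fract_lt_one x)
  obtain ⟨ctrl, hctrl, hmem⟩ := exists_pairwise_bothLt_of_cmp_eq fracts (by
    simp only [fracts, List.mem_cons, List.mem_map]
    rintro _ (rfl | ⟨p, hp, rfl⟩) _ (rfl | ⟨q, hq, rfl⟩)
    · rfl
    · rw [hone, hone]
    · rw [← cmp_swap, hone, ← cmp_swap, hone]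
    · rw [cmp_fract_fract, cmp_fract_fract, hfloor p hp, hfloor q hq]
      exact h p hp q hq _)
  have h0' : ((0 : ℝ), (0 : ℝ)) ∈ ctrl :=
    (hmem _).mpr (List.mem_cons_of_mem _ (List.mem_map.mpr ⟨_, h0, by simp⟩))
  have h1' : ((1 : ℝ), (1 : ℝ)) ∈ ctrl := (hmem _).mpr List.mem_cons_self
  have hswap := pairwise_bothLt_swap hctrl
  have hswap_swap : (ctrl.map Prod.swap).map Prod.swap = ctrl := by simp
  let e : ℝ ≃ ℝ :=
    { toFun := warp ctrl
      invFun := warp (ctrl.map Prod.swap)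
      left_inv := warp_swap_warp hctrl h0' h1'
      right_inv := fun y => by
        simpa only [hswap_swap] using warp_swap_warp hswap
          (List.mem_map_of_mem (f := Prod.swap) h0') (List.mem_map_of_mem (f := Prod.swap) h1') y }
  refine ⟨e.toOrderIso (warp_strictMono hctrl h0' h1').monotone
    (warp_strictMono hswap (List.mem_map_of_mem (f := Prod.swap) h0')
      (List.mem_map_of_mem (f := Prod.swap) h1')).monotone, warp_add_intCast ctrl, ?_⟩
  intro p hp
  exact warp_eq_of_mem hctrl (hfloor p hp)
    ((hmem _).mpr (List.mem_cons_of_mem _ (List.mem_map_of_mem hp)))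

lemma range_eq_range'_append_range'_append_range' {a b n : ℕ} (hab : a ≤ b) (hbn : b ≤ n) :
    List.range n = List.range' 0 a ++ (List.range' a (b - a) ++ List.range' b (n - b)) := by
  have e1 := List.range'_append_1 (s := a) (m := b - a) (n := n - b)
  have e2 := List.range'_append_1 (s := 0) (m := a) (n := n - a)
  rw [show a + (b - a) = b by omega, show b - a + (n - b) = n - a by omega] at e1
  rw [zero_add, Nat.add_sub_cancel' (hab.trans hbn)] at e2
  rw [e1, e2, List.range_eq_range']

namespace Signal

variable {X : Type} (σ : Signal X)

lemma pref_zero : σ.pref 0 = 0 := by simp [pref]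

lemma pref_mono : Monotone σ.pref := fun _ _ hij =>
  ((List.take_sublist_take_left hij).map Prod.snd).sum_le_sum fun _ ha => by
    obtain ⟨e, he, rfl⟩ := List.mem_map.mp ha
    exact (σ.pos e (List.mem_of_mem_take he)).le

lemma pref_succ {i : ℕ} (h : i < σ.len) :
    σ.pref (i + 1) = σ.pref i + (σ.entries.getD i (dflt X)).2 := by
  rw [pref, pref, List.take_add_one, List.getElem?_eq_getElem h, List.getD_eq_getElem _ _ h]
  simp

lemma pref_lt_pref {i j : ℕ} (hij : i < j) (hj : j ≤ σ.len) : σ.pref i < σ.pref j := by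
  have hi : i < σ.len := hij.trans_le hj
  have hpos : 0 < (σ.entries.getD i (dflt X)).2 := by
    rw [List.getD_eq_getElem _ _ hi]
    exact σ.pos _ (List.getElem_mem hi)
  calc σ.pref i < σ.pref (i + 1) := by rw [pref_succ σ hi]; linarith
    _ ≤ σ.pref j := σ.pref_mono hij

lemma pref_min_len (i : ℕ) : σ.pref (min i σ.len) = σ.pref i := by
  rw [pref, pref, List.take_eq_take_min (i := i)]
  rfl

lemma pref_len : σ.pref σ.len = σ.dur := by
  simp [pref, dur, len]

lemma pref_le_dur (i : ℕ) : σ.pref i ≤ σ.dur := by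
  rw [← pref_min_len, ← pref_len]
  exact σ.pref_mono (min_le_right _ _)

lemma pref_nonneg (i : ℕ) : 0 ≤ σ.pref i := σ.pref_zero ▸ σ.pref_mono (Nat.zero_le i)

/-- The index of the entry of `σ` containing the instant `t` (junk `0` if `|σ| ≤ t`). -/
noncomputable def startIdx (t : ℝ) : ℕ :=
  if h : ∃ i, t < σ.pref (i + 1) then Nat.find h else 0

/-- The number of entries of `σ` that start before the instant `t'` (junk `0` if `|σ| < t'`). -/
noncomputable def stopIdx (t' : ℝ) : ℕ :=
  if h : ∃ i, t' ≤ σ.pref i then Nat.find h else 0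

section startIdx

variable {σ} {t : ℝ} (ht : t < σ.dur)

include ht

lemma exists_lt_pref_succ : ∃ i, t < σ.pref (i + 1) :=
  ⟨σ.len, by rwa [← pref_min_len, min_eq_right (Nat.le_succ _), pref_len]⟩

lemma lt_pref_startIdx_succ : t < σ.pref (σ.startIdx t + 1) := by
  rw [startIdx, dif_pos (exists_lt_pref_succ ht)]
  exact Nat.find_spec (exists_lt_pref_succ ht)

lemma startIdx_le {i : ℕ} (h : t < σ.pref (i + 1)) : σ.startIdx t ≤ i := by
  rw [startIdx, dif_pos (exists_lt_pref_succ ht)]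
  exact Nat.find_min' _ h

lemma pref_startIdx_le (ht0 : 0 ≤ t) : σ.pref (σ.startIdx t) ≤ t := by
  rcases Nat.eq_zero_or_eq_succ_pred (σ.startIdx t) with h | h
  · rw [h, pref_zero]
    exact ht0
  · by_contra! hlt
    rw [h] at hlt
    have := startIdx_le ht hlt
    omega

lemma startIdx_congr {u : ℝ} (hu : u < σ.dur) (h : ∀ i ≤ σ.len, t < σ.pref i ↔ u < σ.pref i) :
    σ.startIdx t = σ.startIdx u := by
  rw [startIdx, startIdx, dif_pos (exists_lt_pref_succ ht), dif_pos (exists_lt_pref_succ hu)]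
  exact Nat.find_congr' fun {n} => by
    rw [← pref_min_len]
    exact h _ (min_le_right _ _)

end startIdx

section stopIdx

variable {σ} {t' : ℝ} (ht' : t' ≤ σ.dur)

include ht'

lemma exists_le_pref : ∃ i, t' ≤ σ.pref i := ⟨σ.len, by rwa [pref_len]⟩

lemma le_pref_stopIdx : t' ≤ σ.pref (σ.stopIdx t') := by
  rw [stopIdx, dif_pos (exists_le_pref ht')]
  exact Nat.find_spec (exists_le_pref ht')

lemma pref_lt_of_lt_stopIdx {i : ℕ} (h : i < σ.stopIdx t') : σ.pref i < t' := by
  rw [stopIdx, dif_pos (exists_le_pref ht')] at h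
  exact lt_of_not_ge (Nat.find_min _ h)

lemma stopIdx_le {i : ℕ} (h : t' ≤ σ.pref i) : σ.stopIdx t' ≤ i := by
  rw [stopIdx, dif_pos (exists_le_pref ht')]
  exact Nat.find_min' _ h

lemma stopIdx_le_len : σ.stopIdx t' ≤ σ.len := stopIdx_le ht' (by rw [pref_len]; exact ht')

lemma stopIdx_congr {u' : ℝ} (hu' : u' ≤ σ.dur) (h : ∀ i ≤ σ.len, t' ≤ σ.pref i ↔ u' ≤ σ.pref i) :
    σ.stopIdx t' = σ.stopIdx u' := by
  rw [stopIdx, stopIdx, dif_pos (exists_le_pref ht'), dif_pos (exists_le_pref hu')]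
  exact Nat.find_congr' fun {n} => by
    rw [← pref_min_len]
    exact h _ (min_le_right _ _)

end stopIdx

lemma startIdx_lt_stopIdx {t t' : ℝ} (ht0 : 0 ≤ t) (htt' : t < t') (ht' : t' ≤ σ.dur) :
    σ.startIdx t < σ.stopIdx t' := by
  by_contra! h
  have := σ.pref_mono h
  have := pref_startIdx_le (htt'.trans_le ht') ht0
  have := le_pref_stopIdx ht'
  linarith

section restrict

variable {σ} {t t' : ℝ} (ht0 : 0 ≤ t) (htt' : t < t') (ht' : t' ≤ σ.dur)

include ht0 htt' ht'

lemma restrict_entries : (σ.restrict t t').entries =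
    (List.range' (σ.startIdx t) (σ.stopIdx t' - σ.startIdx t)).map
      fun i => (σ.val i, min (σ.pref (i + 1)) t' - max (σ.pref i) t) := by
  have hab := σ.startIdx_lt_stopIdx ht0 htt' ht'
  have hb := stopIdx_le_len ht'
  show (List.range σ.len).filterMap _ = _
  rw [range_eq_range'_append_range'_append_range' hab.le hb, List.filterMap_append,
    List.filterMap_append, (List.filterMap_eq_nil_iff (l := List.range' 0 _)).mpr,
    (List.filterMap_eq_nil_iff (l := List.range' (σ.stopIdx t') _)).mpr, List.nil_append,
    List.append_nil, ← List.filterMap_eq_map']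
  · refine List.filterMap_congr fun i hi => dif_pos ?_
    rw [List.mem_range'_1] at hi
    simp only [max_lt_iff, lt_min_iff]
    refine ⟨⟨σ.pref_lt_pref (Nat.lt_succ_self i) (by omega), ?_⟩,
      pref_lt_of_lt_stopIdx ht' (by omega), htt'⟩
    exact (lt_pref_startIdx_succ (htt'.trans_le ht')).trans_le (σ.pref_mono (by omega))
  · intro i hi
    rw [List.mem_range'_1] at hi
    refine dif_neg (not_lt.mpr ?_)
    exact (min_le_right _ _).trans ((le_pref_stopIdx ht').trans
      ((σ.pref_mono (by omega : σ.stopIdx t' ≤ i)).trans (le_max_left _ _)))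
  · intro i hi
    rw [List.mem_range'_1] at hi
    refine dif_neg (not_lt.mpr ?_)
    have : σ.pref (i + 1) ≤ t := by
      by_contra! h
      have := startIdx_le (htt'.trans_le ht') h
      omega
    exact (min_le_left _ _).trans (this.trans (le_max_right _ _))

lemma restrict_len : (σ.restrict t t').len = σ.stopIdx t' - σ.startIdx t := by
  rw [len, restrict_entries ht0 htt' ht', List.length_map, List.length_range']

lemma restrict_getD {j : ℕ} (hj : j < σ.stopIdx t' - σ.startIdx t) :
    (σ.restrict t t').entries.getD j (dflt X) =
      (σ.val (σ.startIdx t + j),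
        min (σ.pref (σ.startIdx t + j + 1)) t' - max (σ.pref (σ.startIdx t + j)) t) := by
  rw [restrict_entries ht0 htt' ht', List.getD_eq_getElem _ _ (by simpa using hj),
    List.getElem_map, List.getElem_range', one_mul]

lemma restrict_val {j : ℕ} (hj : j < σ.stopIdx t' - σ.startIdx t) :
    (σ.restrict t t').val j = σ.val (σ.startIdx t + j) := by
  rw [val, restrict_getD ht0 htt' ht' hj]

lemma restrict_pref {j : ℕ} (hj : j ≤ σ.stopIdx t' - σ.startIdx t) :
    (σ.restrict t t').pref j = min (max (σ.pref (σ.startIdx t + j) - t) 0) (t' - t) := by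
  rw [← sub_self t, max_sub_sub_right, min_sub_sub_right]
  induction j with
  | zero =>
    rw [pref_zero, add_zero, max_eq_right (pref_startIdx_le (htt'.trans_le ht') ht0),
      min_eq_left htt'.le, sub_self]
  | succ j ih =>
    have hj' : j < σ.stopIdx t' - σ.startIdx t := by omega
    rw [pref_succ _ (by rw [restrict_len ht0 htt' ht']; exact hj'), ih hj'.le,
      restrict_getD ht0 htt' ht' hj', ← add_assoc]
    have hlt : σ.pref (σ.startIdx t + j) < t' := pref_lt_of_lt_stopIdx ht' (by omega)
    have hgt : t < σ.pref (σ.startIdx t + j + 1) :=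
      (lt_pref_startIdx_succ (htt'.trans_le ht')).trans_le (σ.pref_mono (by omega))
    rw [min_eq_left (max_lt hlt htt').le, max_eq_left hgt.le]
    ring

end restrict

end Signal

section TimeWarp

variable {X L C S : Type} [CSemiring S] [CompleteCSemiring S]

structure SignalWarp (ς₁ ς₂ : Signal X) : Type where
  φ : ℝ ≃o ℝ
  map_add_intCast : ∀ (x : ℝ) (k : ℤ), φ (x + k) = φ x + k
  len_eq : ς₁.len = ς₂.len
  val_eq : ∀ j < ς₁.len, ς₁.val j = ς₂.val j
  map_pref : ∀ j ≤ ς₁.len, φ (ς₁.pref j) = ς₂.pref j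

namespace SignalWarp

variable {ς₁ ς₂ : Signal X} (e : SignalWarp ς₁ ς₂)

def symm : SignalWarp ς₂ ς₁ where
  φ := e.φ.symm
  map_add_intCast y k := e.φ.injective (by
    rw [OrderIso.apply_symm_apply, e.map_add_intCast, OrderIso.apply_symm_apply])
  len_eq := e.len_eq.symm
  val_eq j hj := (e.val_eq j (e.len_eq ▸ hj)).symm
  map_pref j hj := by rw [← e.map_pref j (e.len_eq ▸ hj), OrderIso.symm_apply_apply]

lemma map_zero : e.φ 0 = 0 := by
  simpa only [Signal.pref_zero] using e.map_pref 0 (Nat.zero_le _)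

lemma map_dur : e.φ ς₁.dur = ς₂.dur := by
  rw [← Signal.pref_len, ← Signal.pref_len, ← e.len_eq]
  exact e.map_pref _ le_rfl

lemma cmp_map_sub_map (x y : ℝ) (k : ℤ) : cmp (e.φ y - e.φ x) k = cmp (y - x) k := by
  rw [cmp_eq_cmp_of_sub_eq_sub (sub_sub _ (e.φ x) k), cmp_eq_cmp_of_sub_eq_sub (sub_sub _ x k),
    ← e.map_add_intCast, e.φ.strictMono.cmp_map_eq]

lemma valuesOn_map (x y : ℝ) : ς₂.valuesOn (e.φ x) (e.φ y) = ς₁.valuesOn x y := by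
  unfold Signal.valuesOn
  rw [← e.len_eq]
  congr 1
  refine (List.map_congr_left fun i hi => ?_).trans
    (congrArg _ (List.filter_congr fun i hi => ?_))
  · rw [List.mem_filter, List.mem_range] at hi
    exact (e.val_eq i hi.1).symm
  · rw [List.mem_range] at hi
    simp only [← e.map_pref i hi.le, ← e.map_pref (i + 1) hi, e.φ.lt_iff_lt]

/-- A clock reading `ν c` at time `t` was last reset at time `t - ν c`; after warping it reads
the warped time elapsed since then. -/
def warpState (φ : ℝ → ℝ) (q : WState X L C) : WState X L C :=
  (q.1, fun c => φ q.2.2.1 - φ (q.2.2.1 - q.2.1 c), φ q.2.2.1, q.2.2.2)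

lemma warpState_symm_warpState (q : WState X L C) :
    warpState e.φ.symm (warpState e.φ q) = q := by
  simp only [warpState, sub_sub_cancel, OrderIso.symm_apply_apply]

lemma warpState_mem_wttsQ {q : WState X L C} (hq : q ∈ wttsQ ς₁) :
    warpState e.φ q ∈ wttsQ ς₂ := by
  obtain ⟨hν, ht0, htd, hā⟩ := hq
  refine ⟨fun c => sub_nonneg.mpr (e.φ.monotone (by linarith [hν c])), ?_, ?_, hā⟩
  · simpa only [warpState, e.map_zero] using e.φ.monotone ht0
  · simpa only [warpState, e.map_dur] using e.φ.monotone htd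

lemma warpState_mem_wttsQ0 {A : TSA X L C} {q : WState X L C} (hq : q ∈ wttsQ0 A) :
    warpState e.φ q ∈ wttsQ0 A := by
  obtain ⟨hl, hν, ht, hā⟩ := hq
  refine ⟨hl, funext fun c => ?_, ?_, hā⟩ <;> simp [warpState, hν, ht, e.map_zero]

lemma warpState_mem_wttsQF {A : TSA X L C} {q : WState X L C} (hq : q ∈ wttsQF ς₁ A) :
    warpState e.φ q ∈ wttsQF ς₂ A := by
  obtain ⟨hl, hν, ht, hā⟩ := hq
  refine ⟨hl, fun c => sub_nonneg.mpr (e.φ.monotone (by linarith [hν c])), ?_, hā⟩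
  simp [warpState, ht, e.map_dur]

lemma guardSat_warpState (q : WState X L C) (g : Guard C) :
    guardSat (warpState e.φ q).2.1 g ↔ guardSat q.2.1 g := by
  refine forall₂_congr fun p _ => ?_
  have h := e.cmp_map_sub_map (q.2.2.1 - q.2.1 p.1) q.2.2.1 p.2.2
  rw [sub_sub_cancel] at h
  exact_mod_cast CmpOp.eval_iff_of_cmp_eq h p.2.1

lemma wttsStep_warpState {A : TSA X L C} {q q' : WState X L C} (h : wttsStep ς₁ A q q') :
    wttsStep ς₂ A (warpState e.φ q) (warpState e.φ q') := by
  obtain ⟨hq, hq', hstep⟩ := h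
  refine ⟨e.warpState_mem_wttsQ hq, e.warpState_mem_wttsQ hq', ?_⟩
  rcases hstep with ⟨g, ρ, hΔ, hg, hreset, htime, hne, hemp⟩ | ⟨hloc, τ, hτ, hν, ht, hā⟩
  · refine Or.inl ⟨g, ρ, hΔ, (e.guardSat_warpState q g).mpr hg, funext fun c => ?_,
      congrArg e.φ htime, hne, hemp⟩
    simp only [warpState, htime, hreset, resetVal]
    split_ifs <;> simp
  · refine Or.inr ⟨hloc, e.φ (q.2.2.1 + τ) - e.φ q.2.2.1,
      sub_pos.mpr (e.φ.strictMono (by linarith)), funext fun c => ?_, ?_, ?_⟩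
    · simp only [warpState, ht, hν, add_sub_add_right_eq_sub]
      ring
    · simp only [warpState, ht]
      ring
    · simp only [warpState, add_sub_cancel, hā, ht, e.valuesOn_map]

include e in
theorem traceValue_eq (W : TSWA X L C S) : traceValue ς₁ W = traceValue ς₂ W :=
  sDist_congr_equiv ⟨warpState e.φ, warpState e.φ.symm, e.warpState_symm_warpState,
      e.symm.warpState_symm_warpState⟩
    e.wttsStep_warpState e.symm.wttsStep_warpState e.warpState_mem_wttsQ0
    e.symm.warpState_mem_wttsQ0 e.warpState_mem_wttsQF e.symm.warpState_mem_wttsQF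
    fun _ _ => rfl

end SignalWarp

noncomputable def SignalWarp.restrict {σ : Signal X} {t t' u u' : ℝ}
    (ht0 : 0 ≤ t) (htt' : t < t') (ht' : t' ≤ σ.dur)
    (hu0 : 0 ≤ u) (huu' : u < u') (hu' : u' ≤ σ.dur)
    (φ : ℝ ≃o ℝ) (hφ : ∀ (x : ℝ) (k : ℤ), φ (x + k) = φ x + k) (hzero : φ 0 = 0)
    (hpref : ∀ i ≤ σ.len, φ (σ.pref i - t) = σ.pref i - u) (hend : φ (t' - t) = u' - u) :
    SignalWarp (σ.restrict t t') (σ.restrict u u') :=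
  have hstart : σ.startIdx t = σ.startIdx u :=
    Signal.startIdx_congr (htt'.trans_le ht') (huu'.trans_le hu') fun i hi => by
      rw [← sub_pos, ← sub_pos (a := σ.pref i) (b := u), ← hpref i hi, ← φ.lt_iff_lt, hzero]
  have hstop : σ.stopIdx t' = σ.stopIdx u' :=
    Signal.stopIdx_congr ht' hu' fun i hi => by
      rw [← sub_le_sub_iff_right t, ← sub_le_sub_iff_right u (a := u'), ← hpref i hi, ← hend,
        φ.le_iff_le]
  { φ := φ
    map_add_intCast := hφ
    len_eq := by
      rw [Signal.restrict_len ht0 htt' ht', Signal.restrict_len hu0 huu' hu', hstart, hstop]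
    val_eq := fun j hj => by
      rw [Signal.restrict_len ht0 htt' ht'] at hj
      rw [Signal.restrict_val ht0 htt' ht' hj,
        Signal.restrict_val hu0 huu' hu' (by rwa [← hstart, ← hstop]), hstart]
    map_pref := fun j hj => by
      rw [Signal.restrict_len ht0 htt' ht'] at hj
      have hlen : σ.startIdx t + j ≤ σ.len := by
        have := Signal.stopIdx_le_len ht'
        have := σ.startIdx_lt_stopIdx ht0 htt' ht'
        omega
      rw [Signal.restrict_pref ht0 htt' ht' hj,
        Signal.restrict_pref hu0 huu' hu' (by rwa [← hstart, ← hstop]), φ.monotone.map_min,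
        φ.monotone.map_max, hzero, hend, hpref _ hlen, hstart] }

end TimeWarp

section Zone

variable {C' : Type}

lemma IsZone.inter {Z₁ Z₂ : Set (C' → ℝ)} (h₁ : IsZone Z₁) (h₂ : IsZone Z₂) :
    IsZone (Z₁ ∩ Z₂) := by
  obtain ⟨atoms₁, rfl⟩ := h₁
  obtain ⟨atoms₂, rfl⟩ := h₂
  exact ⟨atoms₁ ++ atoms₂, by ext; simp [or_imp, forall_and]⟩

lemma isZone_iInter {ι : Type} [Finite ι] {Z : ι → Set (C' → ℝ)} (h : ∀ i, IsZone (Z i)) :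
    IsZone (⋂ i, Z i) := by
  have := Fintype.ofFinite ι
  choose atoms hatoms using h
  refine ⟨Finset.univ.toList.flatMap atoms, ?_⟩
  ext ν
  simp only [Set.mem_iInter, hatoms]
  constructor
  · intro h a ha
    obtain ⟨i, -, hai⟩ := List.mem_flatMap.mp ha
    exact h i a hai
  · intro h i a hai
    exact h a (List.mem_flatMap.mpr ⟨i, Finset.mem_toList.mpr (Finset.mem_univ i), hai⟩)

lemma isZone_setOf_eval (c : C') (op : CmpOp) (d : ℝ) : IsZone {ν : C' → ℝ | op.eval (ν c) d} :=
  ⟨[.inl (c, op, d)], by simp⟩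

lemma isZone_setOf_eval_sub (c c' : C') (op : CmpOp) (d : ℝ) :
    IsZone {ν : C' → ℝ | op.eval (ν c - ν c') d} :=
  ⟨[.inr (c, c', op, d)], by simp⟩

lemma isZone_setOf_cmp_eq {f : (C' → ℝ) → ℝ} (hf : ∀ (op : CmpOp) d, IsZone {ν | op.eval (f ν) d})
    (d : ℝ) (o : Ordering) : IsZone {ν | cmp (f ν) d = o} := by
  cases o
  · simpa [CmpOp.eval] using hf .lt d
  · convert (hf .le d).inter (hf .ge d) using 1
    ext
    simp [CmpOp.eval, le_antisymm_iff]
  · simpa [CmpOp.eval] using hf .gt d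

end Zone

section Cell

variable {X : Type} (σ : Signal X)

def domain : Set (Bool → ℝ) := {ν | 0 ≤ ν true ∧ ν true < ν false ∧ ν false ≤ σ.dur}

noncomputable def instant (ν : Bool → ℝ) : Bool ⊕ Fin (σ.len + 1) → ℝ :=
  Sum.elim ν fun i => σ.pref i

-- Exceeds every difference of two instants in `[0, |σ|]`.
noncomputable def cellBound : ℤ := ⌈σ.dur⌉ + 1

abbrev CellIdx : Type :=
  (Bool ⊕ Fin (σ.len + 1)) × (Bool ⊕ Fin (σ.len + 1)) × Finset.Icc (-cellBound σ) (cellBound σ)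

noncomputable def region (ν : Bool → ℝ) (d : CellIdx σ) : Ordering :=
  cmp (instant σ ν d.1 - instant σ ν d.2.1) (d.2.2 : ℤ)

def cell (r : CellIdx σ → Ordering) : Set (Bool → ℝ) := {ν | ν ∈ domain σ ∧ region σ ν = r}

lemma isZone_domain : IsZone (domain σ) := by
  convert (isZone_setOf_eval true .ge 0).inter
    ((isZone_setOf_eval_sub true false .lt 0).inter (isZone_setOf_eval false .le σ.dur)) using 1
  ext ν
  simp [domain, CmpOp.eval]

lemma isZone_setOf_region_eq (d : CellIdx σ) (o : Ordering) :
    IsZone {ν | region σ ν d = o} := by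
  obtain ⟨k, l, z, -⟩ := d
  simp only [region]
  rcases k with b | i <;> rcases l with b' | j <;> simp only [instant, Sum.elim_inl, Sum.elim_inr]
  · exact isZone_setOf_cmp_eq (isZone_setOf_eval_sub b b') _ _
  · have h (ν : Bool → ℝ) : cmp (ν b - σ.pref j) z = cmp (ν b) (σ.pref j + z) :=
      cmp_eq_cmp_of_sub_eq_sub (by ring)
    simp only [h]
    exact isZone_setOf_cmp_eq (isZone_setOf_eval b) _ _
  · have h (ν : Bool → ℝ) : cmp (σ.pref i - ν b') z = (cmp (ν b') (σ.pref i - z)).swap := by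
      rw [cmp_swap]
      exact cmp_eq_cmp_of_sub_eq_sub (by ring)
    simp only [h, Ordering.swap_eq_iff_eq_swap]
    exact isZone_setOf_cmp_eq (isZone_setOf_eval b') _ _
  · -- a comparison between constants: the difference of a clock with itself is `0`
    have h : {ν : Bool → ℝ | cmp (σ.pref i - σ.pref j) z = o} =
        {ν | cmp (ν true - ν true) (z - (σ.pref i - σ.pref j)) = o} :=
      Set.ext fun ν => show _ = o ↔ _ = o by
        rw [cmp_eq_cmp_of_sub_eq_sub (a' := ν true - ν true)
          (b' := z - (σ.pref i - σ.pref j)) (by ring)]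
    rw [h]
    exact isZone_setOf_cmp_eq (isZone_setOf_eval_sub true true) _ _

lemma isZone_cell (r : CellIdx σ → Ordering) : IsZone (cell σ r) := by
  convert (isZone_domain σ).inter (isZone_iInter fun d => isZone_setOf_region_eq σ d (r d)) using 1
  ext ν
  simp only [Set.mem_inter_iff, Set.mem_iInter]
  exact and_congr_right' funext_iff

lemma iUnion_cell : ⋃ r, cell σ r = domain σ :=
  Set.Subset.antisymm (Set.iUnion_subset fun _ _ hν => hν.1)
    fun _ hν => Set.mem_iUnion.mpr ⟨_, hν, rfl⟩

variable {σ}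

lemma mem_cell_region {ν : Bool → ℝ} (hν : ν ∈ domain σ) : ν ∈ cell σ (region σ ν) := ⟨hν, rfl⟩

lemma disjoint_cell {r r' : CellIdx σ → Ordering} (h : r ≠ r') : Disjoint (cell σ r) (cell σ r') :=
  Set.disjoint_left.mpr fun _ hr hr' => h (hr.2.symm.trans hr'.2)

lemma instant_mem_Icc {ν : Bool → ℝ} (hν : ν ∈ domain σ) :
    ∀ k, instant σ ν k ∈ Set.Icc 0 σ.dur
  | .inl false => ⟨(hν.1.trans hν.2.1.le : 0 ≤ ν false), hν.2.2⟩
  | .inl true => ⟨hν.1, (hν.2.1.le.trans hν.2.2 : ν true ≤ σ.dur)⟩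
  | .inr i => ⟨σ.pref_nonneg i, σ.pref_le_dur i⟩

lemma abs_instant_sub_instant_lt {ν : Bool → ℝ} (hν : ν ∈ domain σ) (k l) :
    |instant σ ν k - instant σ ν l| < cellBound σ := by
  obtain ⟨hk0, hk⟩ := instant_mem_Icc hν k
  obtain ⟨hl0, hl⟩ := instant_mem_Icc hν l
  have : σ.dur < cellBound σ := by
    rw [cellBound, Int.cast_add, Int.cast_one]
    linarith [Int.le_ceil σ.dur]
  rw [abs_lt]
  constructor <;> linarith

lemma cmp_intCast_eq_of_forall_abs_le {x y : ℝ} {M : ℤ} (hx : |x| < M) (hy : |y| < M)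
    (h : ∀ z : ℤ, |z| ≤ M → cmp x z = cmp y z) (z : ℤ) : cmp x z = cmp y z := by
  rw [abs_lt] at hx hy
  rcases le_or_gt |z| M with hz | hz
  · exact h z hz
  rcases lt_abs.mp hz with hz | hz
  · have : (M : ℝ) < z := by exact_mod_cast hz
    rw [(cmp_eq_lt_iff _ _).mpr (by linarith), (cmp_eq_lt_iff _ _).mpr (by linarith)]
  · have : (z : ℝ) < -M := by exact_mod_cast (by linarith : z < -M)
    rw [(cmp_eq_gt_iff _ _).mpr (by linarith), (cmp_eq_gt_iff _ _).mpr (by linarith)]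

lemma cmp_instant_sub_eq_of_region_eq {ν₀ ν₁ : Bool → ℝ} (hν₀ : ν₀ ∈ domain σ)
    (hν₁ : ν₁ ∈ domain σ) (h : region σ ν₀ = region σ ν₁) (k l) (z : ℤ) :
    cmp (instant σ ν₀ k - instant σ ν₀ l) z = cmp (instant σ ν₁ k - instant σ ν₁ l) z :=
  cmp_intCast_eq_of_forall_abs_le (abs_instant_sub_instant_lt hν₀ k l)
    (abs_instant_sub_instant_lt hν₁ k l)
    (fun z hz => congrFun h (k, l, ⟨z, Finset.mem_Icc.mpr (abs_le.mp hz)⟩)) z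

theorem traceValue_restrict_eq_of_region_eq {L C S : Type} [CSemiring S] [CompleteCSemiring S]
    (W : TSWA X L C S) {ν₀ ν₁ : Bool → ℝ} (hν₀ : ν₀ ∈ domain σ) (hν₁ : ν₁ ∈ domain σ)
    (h : region σ ν₀ = region σ ν₁) :
    traceValue (σ.restrict (ν₀ true) (ν₀ false)) W =
      traceValue (σ.restrict (ν₁ true) (ν₁ false)) W := by
  set pairs := Finset.univ.toList.map fun k =>
    (instant σ ν₀ k - ν₀ true, instant σ ν₁ k - ν₁ true)
  have hmem : ∀ k, (instant σ ν₀ k - ν₀ true, instant σ ν₁ k - ν₁ true) ∈ pairs := fun k =>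
    List.mem_map.mpr ⟨k, Finset.mem_toList.mpr (Finset.mem_univ k), rfl⟩
  obtain ⟨φ, hφ, hmap⟩ := exists_orderIso_of_cmp_sub_intCast pairs
    (by simpa [instant] using hmem (.inl true)) (by
      simp only [pairs, List.mem_map, Finset.mem_toList, Finset.mem_univ, true_and]
      rintro _ ⟨k, rfl⟩ _ ⟨l, rfl⟩ z
      simp only [sub_sub_sub_cancel_right]
      exact cmp_instant_sub_eq_of_region_eq hν₀ hν₁ h k l z)
  have hφ' := fun k => hmap _ (hmem k)
  obtain ⟨h0, h01, h1⟩ := hν₀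
  obtain ⟨g0, g01, g1⟩ := hν₁
  exact (SignalWarp.restrict h0 h01 h1 g0 g01 g1 φ hφ (by simpa [instant] using hφ' (.inl true))
    (fun i hi => hφ' (.inr ⟨i, by omega⟩)) (hφ' (.inl false))).traceValue_eq W

lemma exists_forall_mem_cell_traceValue_eq {L C S : Type} [CSemiring S] [CompleteCSemiring S]
    (W : TSWA X L C S) (r : CellIdx σ → Ordering) :
    ∃ v : S, ∀ ν ∈ cell σ r, traceValue (σ.restrict (ν true) (ν false)) W = v := by
  by_cases hr : (cell σ r).Nonempty
  · obtain ⟨ν₀, hν₀⟩ := hr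
    exact ⟨_, fun ν hν => traceValue_restrict_eq_of_region_eq W hν.1 hν₀.1 (hν.2.trans hν₀.2.symm)⟩
  · exact ⟨CSemiring.zero, fun ν hν => absurd ⟨ν, hν⟩ hr⟩

end Cell

theorem statement0_general {X L C S : Type} [CSemiring S] [CompleteCSemiring S]
    (W : TSWA X L C S) (σ : Signal X) :
    ∃ (m : ℕ) (Z : Fin m → Set (Bool → ℝ)) (s : Fin m → S),
      (∀ i, IsZone (Z i)) ∧
      (∀ i j, i ≠ j → Disjoint (Z i) (Z j)) ∧
      (⋃ i, Z i) = {ν : Bool → ℝ | 0 ≤ ν true ∧ ν true < ν false ∧ ν false ≤ σ.dur} ∧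
      (∀ t t' : ℝ, 0 ≤ t → t < t' → t' ≤ σ.dur →
        ∃ i, ∃ ν ∈ Z i, ν true = t ∧ ν false = t' ∧
          traceValue (σ.restrict t t') W = s i) := by
  obtain ⟨m, ⟨e⟩⟩ := Finite.exists_equiv_fin (CellIdx σ → Ordering)
  choose v hv using exists_forall_mem_cell_traceValue_eq W (σ := σ)
  refine ⟨m, fun i => cell σ (e.symm i), fun i => v (e.symm i), fun i => isZone_cell σ _,
    fun i j hij => disjoint_cell (e.symm.injective.ne hij),
    (e.symm.surjective.iUnion_comp (cell σ)).trans (iUnion_cell σ), fun t t' ht0 htt' ht' => ?_⟩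
  set ν : Bool → ℝ := fun b => bif b then t else t'
  have hν : ν ∈ domain σ := ⟨ht0, htt', ht'⟩
  obtain ⟨i, hi⟩ := e.symm.surjective (region σ ν)
  have hmem : ν ∈ cell σ (e.symm i) := hi ▸ mem_cell_region hν
  exact ⟨i, ν, hmem, rfl, rfl, hv _ ν hmem⟩

/-- For any TSWA `W` over `ℝ` and a complete semiring `S`, and any
piecewise-constant signal `σ`, there is a finite family of pairs `(Zᵢ, sᵢ)` of a zone
over the two clocks `{t_begin, t_end}` (encoded as `Bool`, with `true = t_begin` and
`false = t_end`) and a semiring value, such that the zones partition the domain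
`{(t,t') | 0 ≤ t < t' ≤ |σ|}`, and for every `0 ≤ t < t' ≤ |σ|` there are `i` and
`ν ∈ Zᵢ` with `ν(t_begin) = t`, `ν(t_end) = t'`, and `(M(σ,W))(t,t') = sᵢ`, where
`(M(σ,W))(t,t') = α(σ([t,t')), W)` is the quantitative matching function. -/
theorem statement0 {X L C S : Type} [Finite X] [Finite L] [Finite C]
    [CSemiring S] [CompleteCSemiring S]
    (W : TSWA X L C S) (σ : Signal X) :
    ∃ (m : ℕ) (Z : Fin m → Set (Bool → ℝ)) (s : Fin m → S),
      (∀ i, IsZone (Z i)) ∧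
      (∀ i j, i ≠ j → Disjoint (Z i) (Z j)) ∧
      (⋃ i, Z i) = {ν : Bool → ℝ | 0 ≤ ν true ∧ ν true < ν false ∧ ν false ≤ σ.dur} ∧
      (∀ t t' : ℝ, 0 ≤ t → t < t' → t' ≤ σ.dur →
        ∃ i, ∃ ν ∈ Z i, ν true = t ∧ ν false = t' ∧
          traceValue (σ.restrict t t') W = s i) :=
  statement0_general W σ

end QTPM
end

section
/- Let S^sym be the WSTTS of a signal σ=a₁^{τ₁}⋯a_n^{τ_n} and a TSWA W. For every reachable symbolic state (l,Z,ā) ∈ Reach(S^sym) and all c,c' ∈ C⊔{T,0} (where 0 is the reference clock of constant value 0), the canonical zone bound d_{Z,c,c'} is either ∞, or there exist integers k₀,k₁,…,k_n ∈ ℤ such that d_{Z,c,c'} = k₀ + Σ_{i=1}^{n} k_i·(Σ_{j=1}^{i} τ_j). -/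
attribute [local instance] Classical.propDecidable

/-!
Write `G` for the additive group generated by `1` and the prefix sums `τ₁ + ⋯ + τᵢ`. The
canonical bounds of every reachable zone lie in `G ∪ {∞}`, by induction along the reachability
relation. If all bounds of a nonempty zone `Z` lie in `G ∪ {∞}`, then `Z` is cut out by its
canonical difference constraints, whose bounds lie in `G`. A guard adds constraints with integer
bounds, a reset renames variables, time elapse adds a fresh reference point strictly below the old
one, and the intersection with `T = τ₁ + ⋯ + τᵢ` or with `τ₁ + ⋯ + τᵢ₋₁ < T < τ₁ + ⋯ + τᵢ` adds
constraints with bounds `±(τ₁ + ⋯ + τⱼ)`. So the successor zone is again the projection of the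
solutions of a finite system of difference constraints with bounds in `G`. For such a system, the
supremum of `μ x - μ y` is either `∞` or the weight of a shortest path from `x` to `y` in its
constraint graph, i.e. a sum of bounds, which lies in `G`.
-/

def AddSubmonoid.withTop (G : AddSubmonoid ℝ) : AddSubmonoid EReal where
  carrier := {e | e = ⊤ ∨ ∃ g ∈ G, e = g}
  zero_mem' := Or.inr ⟨0, G.zero_mem, rfl⟩
  add_mem' := by
    rintro _ _ (rfl | ⟨g, hg, rfl⟩) (rfl | ⟨g', hg', rfl⟩)
    · exact Or.inl (EReal.top_add_top)
    · exact Or.inl (EReal.top_add_coe g')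
    · exact Or.inl (EReal.coe_add_top g)
    · exact Or.inr ⟨g + g', G.add_mem hg hg', (EReal.coe_add g g').symm⟩

theorem AddSubmonoid.coe_mem_withTop {G : AddSubmonoid ℝ} {g : ℝ} (hg : g ∈ G) :
    (g : EReal) ∈ G.withTop :=
  Or.inr ⟨g, hg, rfl⟩

structure DiffConstraint (V : Type) where
  left : V
  right : V
  bound : ℝ
  strict : Bool

namespace DiffConstraint

variable {V W : Type}

def Holds (a : DiffConstraint V) (μ : V → ℝ) : Prop :=
  if a.strict then μ a.left - μ a.right < a.bound else μ a.left - μ a.right ≤ a.bound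

def solutions (A : Set (DiffConstraint V)) : Set (V → ℝ) := {μ | ∀ a ∈ A, a.Holds μ}

def map (e : W → V) (a : DiffConstraint W) : DiffConstraint V :=
  ⟨e a.left, e a.right, a.bound, a.strict⟩

theorem Holds.sub_le {a : DiffConstraint V} {μ : V → ℝ} (h : a.Holds μ) :
    μ a.left - μ a.right ≤ a.bound := by
  unfold Holds at h
  split at h
  · exact h.le
  · exact h

theorem Holds.of_sub_le {a : DiffConstraint V} {μ μ' : V → ℝ} (h : a.Holds μ')
    (hle : μ a.left - μ a.right ≤ μ' a.left - μ' a.right) : a.Holds μ := by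
  cases hs : a.strict <;> simp only [Holds, hs, if_true, Bool.false_eq_true, if_false] at h ⊢ <;>
    linarith

theorem holds_map {e : W → V} {a : DiffConstraint W} {μ : V → ℝ} :
    (a.map e).Holds μ ↔ a.Holds (μ ∘ e) := Iff.rfl

theorem holds_add_const {a : DiffConstraint V} {μ : V → ℝ} (t : ℝ) :
    a.Holds (fun v => μ v + t) ↔ a.Holds μ := by
  simp only [Holds, add_sub_add_right_eq_sub]

theorem Holds.convex {a : DiffConstraint V} {μ₀ μ₁ : V → ℝ} (h₀ : a.Holds μ₀)
    (h₁ : μ₁ a.left - μ₁ a.right ≤ a.bound) {θ : ℝ} (hθ₀ : 0 ≤ θ) (hθ₁ : θ < 1) :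
    a.Holds (fun v => θ * μ₁ v + (1 - θ) * μ₀ v) := by
  have hsplit : (θ * μ₁ a.left + (1 - θ) * μ₀ a.left) - (θ * μ₁ a.right + (1 - θ) * μ₀ a.right)
      = θ * (μ₁ a.left - μ₁ a.right) + (1 - θ) * (μ₀ a.left - μ₀ a.right) := by ring
  have h₁' := mul_le_mul_of_nonneg_left h₁ hθ₀
  have h₀' : 0 < 1 - θ := by linarith
  cases hs : a.strict <;>
    simp only [Holds, hs, if_true, Bool.false_eq_true, if_false, hsplit] at h₀ ⊢
  · nlinarith
  · nlinarith

end DiffConstraint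

section Paths

variable {V : Type} (w : V → V → EReal)

/-- The weight of the path `u → l₁ → ⋯ → lₖ → v` through the intermediate vertices `l`. -/
noncomputable def pathWeight : List V → V → V → EReal
  | [], u, v => w u v
  | c :: l, u, v => w u c + pathWeight l c v

noncomputable def minPathWeight (u v : V) : EReal := ⨅ l, pathWeight w l u v

variable {w}

theorem pathWeight_append_cons (s : List V) (c : V) (t : List V) (u v : V) :
    pathWeight w (s ++ c :: t) u v = pathWeight w s u c + pathWeight w t c v := by
  induction s generalizing u with
  | nil => rfl
  | cons d s ih => simp only [List.cons_append, pathWeight, ih, add_assoc]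

theorem pathWeight_mem {G : AddSubmonoid EReal} (hw : ∀ u v, w u v ∈ G) (l : List V) (u v : V) :
    pathWeight w l u v ∈ G := by
  induction l generalizing u with
  | nil => exact hw u v
  | cons c l ih => exact G.add_mem (hw u c) (ih c)

theorem minPathWeight_le (l : List V) (u v : V) : minPathWeight w u v ≤ pathWeight w l u v :=
  iInf_le _ l

theorem exists_nodup_pathWeight_le (hcyc : ∀ l v, 0 ≤ pathWeight w l v v) (l : List V) (u v : V) :
    ∃ l', l'.Nodup ∧ pathWeight w l' u v ≤ pathWeight w l u v := by
  induction l generalizing u with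
  | nil => exact ⟨[], List.nodup_nil, le_rfl⟩
  | cons c l ih =>
    obtain ⟨l₁, hl₁, hle⟩ := ih c
    have hstep : w u c + pathWeight w l₁ c v ≤ pathWeight w (c :: l) u v :=
      add_le_add_right hle _
    by_cases hc : c ∈ l₁
    · obtain ⟨s, t, rfl⟩ := List.append_of_mem hc
      refine ⟨c :: t, (List.nodup_append.1 hl₁).2.1, le_trans ?_ hstep⟩
      rw [pathWeight_append_cons]
      exact add_le_add_right (le_add_of_nonneg_left (hcyc s c)) _
    · exact ⟨c :: l₁, List.nodup_cons.2 ⟨hc, hl₁⟩, hstep⟩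

theorem exists_minPathWeight_eq [Finite V] (hcyc : ∀ l v, 0 ≤ pathWeight w l v v) (u v : V) :
    ∃ l, minPathWeight w u v = pathWeight w l u v := by
  have := Fintype.ofFinite V
  have hfin : {l : List V | l.Nodup}.Finite :=
    (List.finite_length_le V (Fintype.card V)).subset fun l hl => List.Nodup.length_le_card hl
  obtain ⟨l₀, -, hl₀⟩ := Set.exists_min_image _ (fun l => pathWeight w l u v) hfin
    ⟨[], List.nodup_nil⟩
  refine ⟨l₀, le_antisymm (minPathWeight_le l₀ u v) (le_iInf fun l => ?_)⟩
  obtain ⟨l', hl', hle⟩ := exists_nodup_pathWeight_le hcyc l u v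
  exact (hl₀ l' hl').trans hle

theorem minPathWeight_le_add [Finite V] (hcyc : ∀ l v, 0 ≤ pathWeight w l v v) (u v y : V) :
    minPathWeight w u y ≤ w u v + minPathWeight w v y := by
  obtain ⟨l, hl⟩ := exists_minPathWeight_eq hcyc v y
  rw [hl]
  exact minPathWeight_le (v :: l) u y

end Paths

namespace DiffConstraint

variable {V : Type} {A : Set (DiffConstraint V)}

noncomputable def edgeWeight (A : Set (DiffConstraint V)) (u v : V) : EReal :=
  sInf ((fun a => (a.bound : EReal)) '' {a ∈ A | a.left = u ∧ a.right = v})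

theorem edgeWeight_le {a : DiffConstraint V} (ha : a ∈ A) :
    edgeWeight A a.left a.right ≤ a.bound :=
  sInf_le ⟨a, ⟨ha, rfl, rfl⟩, rfl⟩

theorem edgeWeight_mem {G : AddSubmonoid ℝ} (hA : A.Finite) (hG : ∀ a ∈ A, a.bound ∈ G)
    (u v : V) : edgeWeight A u v ∈ G.withTop := by
  rcases Set.eq_empty_or_nonempty {a ∈ A | a.left = u ∧ a.right = v} with h | h
  · exact Or.inl (by rw [edgeWeight, h, Set.image_empty, sInf_empty])
  · obtain ⟨a, ha, heq⟩ := (h.image fun a : DiffConstraint V => (a.bound : EReal)).csInf_mem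
      ((hA.subset (Set.sep_subset _ _)).image _)
    rw [edgeWeight, ← heq]
    exact AddSubmonoid.coe_mem_withTop (hG a ha.1)

variable {μ : V → ℝ}

theorem sub_le_edgeWeight (hμ : μ ∈ solutions A) (u v : V) :
    ((μ u - μ v : ℝ) : EReal) ≤ edgeWeight A u v :=
  le_sInf <| by
    rintro _ ⟨a, ⟨ha, rfl, rfl⟩, rfl⟩
    exact EReal.coe_le_coe_iff.2 (hμ a ha).sub_le

theorem sub_le_pathWeight (hμ : μ ∈ solutions A) (l : List V) (u v : V) :
    ((μ u - μ v : ℝ) : EReal) ≤ pathWeight (edgeWeight A) l u v := by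
  induction l generalizing u with
  | nil => exact sub_le_edgeWeight hμ u v
  | cons c l ih =>
    calc ((μ u - μ v : ℝ) : EReal) = ((μ u - μ c : ℝ) : EReal) + ((μ c - μ v : ℝ) : EReal) := by
          rw [← EReal.coe_add, sub_add_sub_cancel]
      _ ≤ pathWeight (edgeWeight A) (c :: l) u v := add_le_add (sub_le_edgeWeight hμ u c) (ih c)

theorem pathWeight_cycle_nonneg (hμ : μ ∈ solutions A) (l : List V) (v : V) :
    0 ≤ pathWeight (edgeWeight A) l v v := by
  simpa using sub_le_pathWeight hμ l v v

theorem sub_le_minPathWeight (hμ : μ ∈ solutions A) (u v : V) :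
    ((μ u - μ v : ℝ) : EReal) ≤ minPathWeight (edgeWeight A) u v :=
  le_iInf fun l => sub_le_pathWeight hμ l u v

variable {μ₀ : V → ℝ} {x y : V}

theorem minPathWeight_self_eq_zero (hμ₀ : μ₀ ∈ solutions A) (hy : ⟨y, y, 0, false⟩ ∈ A) :
    minPathWeight (edgeWeight A) y y = 0 :=
  le_antisymm ((minPathWeight_le [] y y).trans (edgeWeight_le hy))
    (by simpa using sub_le_minPathWeight hμ₀ y y)

/-- Raising by `M` every vertex from which `y` is unreachable tightens no constraint, because
the vertices that reach `y` are closed under predecessors. -/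
theorem exists_mem_solutions_le_sub [Finite V] (hμ₀ : μ₀ ∈ solutions A)
    (hy : ⟨y, y, 0, false⟩ ∈ A) (hx : minPathWeight (edgeWeight A) x y = ⊤) (M : ℝ) :
    ∃ μ ∈ solutions A, M ≤ μ x - μ y := by
  set R := {v | minPathWeight (edgeWeight A) v y ≠ ⊤}
  have hyR : y ∈ R := by simp [R, minPathWeight_self_eq_zero hμ₀ hy]
  have hxR : x ∉ R := by simp [R, hx]
  have hR : ∀ a ∈ A, a.right ∈ R → a.left ∈ R := fun a ha hv => ne_top_of_le_ne_top
    (EReal.add_lt_top ((edgeWeight_le ha).trans_lt (EReal.coe_lt_top _)).ne hv).ne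
    (minPathWeight_le_add (pathWeight_cycle_nonneg hμ₀) a.left a.right y)
  set M' := max 0 (M - (μ₀ x - μ₀ y))
  refine ⟨fun v => μ₀ v + if v ∈ R then 0 else M', fun a ha => (hμ₀ a ha).of_sub_le ?_, ?_⟩
  · have hM' : 0 ≤ M' := le_max_left _ _
    by_cases hl : a.left ∈ R
    · by_cases hr : a.right ∈ R <;> simp only [hl, hr, if_true, if_false] <;> linarith
    · simp only [hl, mt (hR a ha) hl, if_false]
      linarith
  · simp only [hxR, hyR, if_false, if_true]
    linarith [le_max_right 0 (M - (μ₀ x - μ₀ y))]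

/-- The potentials `v ↦ minPathWeight v y` satisfy every constraint non-strictly by the triangle
inequality; capping them by a translate of `μ₀` makes them finite without breaking this. -/
theorem exists_le_bound_sub_eq [Finite V] (hμ₀ : μ₀ ∈ solutions A)
    (hy : ⟨y, y, 0, false⟩ ∈ A) {g : ℝ} (hx : minPathWeight (edgeWeight A) x y = g) :
    ∃ μ : V → ℝ, (∀ a ∈ A, μ a.left - μ a.right ≤ a.bound) ∧ μ x - μ y = g := by
  set d := fun v => minPathWeight (edgeWeight A) v y
  set K := max (g - μ₀ x) (-μ₀ y)
  set m : V → EReal := fun v => min (d v) ((K + μ₀ v : ℝ) : EReal)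
  have hd : ∀ v, ((μ₀ v - μ₀ y : ℝ) : EReal) ≤ d v := fun v => sub_le_minPathWeight hμ₀ v y
  have hm : ∀ v, ((m v).toReal : EReal) = m v := fun v =>
    EReal.coe_toReal (ne_top_of_le_ne_top (EReal.coe_ne_top _) (min_le_right _ _))
      (lt_min ((EReal.bot_lt_coe _).trans_le (hd v)) (EReal.bot_lt_coe _)).ne'
  have hmx : m x = g := by
    simp only [m, d, hx]
    exact min_eq_left (EReal.coe_le_coe_iff.2 (by linarith [le_max_left (g - μ₀ x) (-μ₀ y)]))
  have hmy : m y = 0 := by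
    simp only [m, d, minPathWeight_self_eq_zero hμ₀ hy]
    exact min_eq_left (EReal.coe_nonneg.2 (by linarith [le_max_right (g - μ₀ x) (-μ₀ y)]))
  refine ⟨fun v => (m v).toReal, fun a ha => ?_, by simp [hmx, hmy]⟩
  have key : m a.left ≤ a.bound + m a.right := by
    rw [← min_add_add_left]
    refine le_min ((min_le_left _ _).trans ?_) ((min_le_right _ _).trans ?_)
    · exact (minPathWeight_le_add (pathWeight_cycle_nonneg hμ₀) a.left a.right y).trans
        (add_le_add_left (edgeWeight_le ha) _)
    · rw [← EReal.coe_add, EReal.coe_le_coe_iff]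
      linarith [(hμ₀ a ha).sub_le]
  rw [← hm a.left, ← hm a.right, ← EReal.coe_add, EReal.coe_le_coe_iff] at key
  simp only
  linarith

theorem exists_mem_solutions_lt_sub {μ₁ : V → ℝ} (hμ₀ : μ₀ ∈ solutions A)
    (hμ₁ : ∀ a ∈ A, μ₁ a.left - μ₁ a.right ≤ a.bound) {r : ℝ} (hr : r < μ₁ x - μ₁ y) :
    ∃ μ ∈ solutions A, r < μ x - μ y := by
  set c := μ₀ x - μ₀ y
  set g := μ₁ x - μ₁ y
  by_cases hrc : r < c
  · exact ⟨μ₀, hμ₀, hrc⟩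
  have hgc : 0 < g - c := by linarith
  set θ := (r + g - 2 * c) / (2 * (g - c))
  have hθ : θ * (g - c) = (r + g - 2 * c) / 2 := by
    simp only [θ]
    field_simp
  have hθ₀ : 0 ≤ θ := div_nonneg (by linarith) (by linarith)
  have hθ₁ : θ < 1 := (div_lt_one (by linarith)).2 (by linarith)
  refine ⟨fun v => θ * μ₁ v + (1 - θ) * μ₀ v,
    fun a ha => (hμ₀ a ha).convex (hμ₁ a ha) hθ₀ hθ₁, ?_⟩
  linarith [show θ * μ₁ x + (1 - θ) * μ₀ x - (θ * μ₁ y + (1 - θ) * μ₀ y) = c + θ * (g - c) by ring]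

theorem sSup_sub_eq_minPathWeight [Finite V] (hμ₀ : μ₀ ∈ solutions A)
    (hy : ⟨y, y, 0, false⟩ ∈ A) (x : V) :
    sSup ((fun μ => ((μ x - μ y : ℝ) : EReal)) '' solutions A) =
      minPathWeight (edgeWeight A) x y := by
  refine le_antisymm (sSup_le ?_) ?_
  · rintro _ ⟨μ, hμ, rfl⟩
    exact sub_le_minPathWeight hμ x y
  induction hd : minPathWeight (edgeWeight A) x y using EReal.rec with
  | bot => exact absurd hd (ne_bot_of_le_ne_bot (EReal.coe_ne_bot _) (sub_le_minPathWeight hμ₀ x y))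
  | coe g =>
    obtain ⟨μ₁, hμ₁, hg⟩ := exists_le_bound_sub_eq hμ₀ hy hd
    refine le_of_forall_lt_imp_le_of_dense fun e he => ?_
    obtain ⟨r, her, hrg⟩ := EReal.exists_between_coe_real he
    obtain ⟨μ, hμ, hr⟩ := exists_mem_solutions_lt_sub hμ₀ hμ₁ (hg ▸ EReal.coe_lt_coe_iff.1 hrg)
    exact her.le.trans ((EReal.coe_le_coe_iff.2 hr.le).trans (le_sSup ⟨μ, hμ, rfl⟩))
  | top =>
    rw [top_le_iff, EReal.eq_top_iff_forall_lt]
    intro M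
    obtain ⟨μ, hμ, hM⟩ := exists_mem_solutions_le_sub hμ₀ hy hd (M + 1)
    exact (EReal.coe_lt_coe_iff.2 (by linarith)).trans_le (le_sSup ⟨μ, hμ, rfl⟩)

theorem sSup_sub_mem_withTop [Finite V] {G : AddSubmonoid ℝ} (hA : A.Finite)
    (hG : ∀ a ∈ A, a.bound ∈ G) (hne : (solutions A).Nonempty) (x y : V) :
    sSup ((fun μ => ((μ x - μ y : ℝ) : EReal)) '' solutions A) ∈ G.withTop := by
  -- the trivially true constraint `μ y - μ y ≤ 0` anchors the path weights to `y` at `0`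
  set A' := insert ⟨y, y, 0, false⟩ A
  have hA' : solutions A' = solutions A := by
    ext μ
    simp [A', solutions, Holds]
  obtain ⟨μ₀, hμ₀⟩ := hne
  rw [← hA', sSup_sub_eq_minPathWeight (hA' ▸ hμ₀) (Set.mem_insert _ _)]
  obtain ⟨l, hl⟩ := exists_minPathWeight_eq (pathWeight_cycle_nonneg (hA' ▸ hμ₀)) x y
  rw [hl]
  refine pathWeight_mem (edgeWeight_mem (hA.insert _) ?_) l x y
  exact Set.forall_mem_insert.2 ⟨G.zero_mem, hG⟩

end DiffConstraint

section SupremumOfImage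

variable {α : Type} {s : Set α} {f : α → ℝ}

theorem exists_le_iff_of_sSup_eq {d : ℝ} (hd : sSup ((fun x => (f x : EReal)) '' s) = d) (t : ℝ) :
    (∃ x ∈ s, t ≤ f x) ↔ if ∀ x ∈ s, f x ≠ d then t < d else t ≤ d := by
  have hle : ∀ x ∈ s, f x ≤ d := fun x hx =>
    EReal.coe_le_coe_iff.1 (hd ▸ le_sSup ⟨x, hx, rfl⟩)
  split_ifs with hne
  · refine ⟨fun ⟨x, hx, htx⟩ => htx.trans_lt ((hle x hx).lt_of_ne (hne x hx)), fun htd => ?_⟩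
    obtain ⟨_, ⟨x, hx, rfl⟩, hlt⟩ := lt_sSup_iff.1 (hd ▸ EReal.coe_lt_coe_iff.2 htd)
    exact ⟨x, hx, (EReal.coe_lt_coe_iff.1 hlt).le⟩
  · obtain ⟨x, hx, hfx⟩ := not_forall₂.1 hne
    exact ⟨fun ⟨y, hy, h⟩ => h.trans (hle y hy), fun h => ⟨x, hx, (not_not.1 hfx) ▸ h⟩⟩

theorem exists_le_of_sSup_eq_top (h : sSup ((fun x => (f x : EReal)) '' s) = ⊤) (t : ℝ) :
    ∃ x ∈ s, t ≤ f x := by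
  obtain ⟨_, ⟨x, hx, rfl⟩, hlt⟩ := lt_sSup_iff.1 (h ▸ EReal.coe_lt_top t)
  exact ⟨x, hx, (EReal.coe_lt_coe_iff.1 hlt).le⟩

end SupremumOfImage

namespace QTPM

open DiffConstraint

section

variable {C V : Type} {Z : Set (ClockT C → ℝ)}

def CmpOp.toConstraint : CmpOp → V → V → ℝ → DiffConstraint V
  | .lt, x, y, d => ⟨x, y, d, true⟩
  | .le, x, y, d => ⟨x, y, d, false⟩
  | .gt, x, y, d => ⟨y, x, -d, true⟩
  | .ge, x, y, d => ⟨y, x, -d, false⟩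

theorem CmpOp.holds_toConstraint (op : CmpOp) (x y : V) (d : ℝ) (μ : V → ℝ) :
    (op.toConstraint x y d).Holds μ ↔ op.eval (μ x - μ y) d := by
  cases op <;> simp only [toConstraint, Holds, eval, if_true, Bool.false_eq_true, if_false] <;>
    constructor <;> intro <;> linarith

theorem CmpOp.toConstraint_bound_mem {H : AddSubgroup ℝ} (op : CmpOp) (x y : V)
    {d : ℝ} (hd : d ∈ H) : (op.toConstraint x y d).bound ∈ H.toAddSubmonoid := by
  cases op
  exacts [hd, hd, H.neg_mem hd, H.neg_mem hd]

theorem IsZone.exists_eq_setOf_solutions (hZ : IsZone Z) :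
    ∃ B : Set (DiffConstraint (Option (ClockT C))), Z = {ν | extRef ν ∈ solutions B} := by
  obtain ⟨atoms, rfl⟩ := hZ
  refine ⟨(fun a => match a with
      | .inl (c, op, d) => op.toConstraint (some c) none d
      | .inr (c, c', op, d) => op.toConstraint (some c) (some c') d) '' {a | a ∈ atoms}, ?_⟩
  ext ν
  simp only [Set.mem_ofPred_eq, solutions, Set.forall_mem_image]
  refine forall₂_congr fun a _ => ?_
  rcases a with ⟨c, op, d⟩ | ⟨c, c', op, d⟩ <;> simp [CmpOp.holds_toConstraint, extRef]

theorem zoneBound_ne_bot (hne : Z.Nonempty) (c c' : Option (ClockT C)) : zoneBound Z c c' ≠ ⊥ :=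
  let ⟨ν, hν⟩ := hne
  ne_bot_of_le_ne_bot (EReal.coe_ne_bot _) (le_sSup ⟨ν, hν, rfl⟩)

/-- The canonical constraint `ν c - ν c' ≺_{Z,c,c'} d_{Z,c,c'}`. -/
noncomputable def canonicalConstraint (Z : Set (ClockT C → ℝ)) (c c' : Option (ClockT C)) :
    DiffConstraint (Option (ClockT C)) :=
  ⟨c, c', (zoneBound Z c c').toReal,
    decide (∀ ν ∈ Z, extRef ν c - extRef ν c' ≠ (zoneBound Z c c').toReal)⟩

def canonicalConstraints (Z : Set (ClockT C → ℝ)) : Set (DiffConstraint (Option (ClockT C))) :=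
  (fun p : Option (ClockT C) × Option (ClockT C) => canonicalConstraint Z p.1 p.2) ''
    {p | zoneBound Z p.1 p.2 ≠ ⊤}

theorem holds_canonicalConstraint_iff (hne : Z.Nonempty) {c c' : Option (ClockT C)}
    (h : zoneBound Z c c' ≠ ⊤) (μ : Option (ClockT C) → ℝ) :
    (canonicalConstraint Z c c').Holds μ ↔ ∃ ν ∈ Z, μ c - μ c' ≤ extRef ν c - extRef ν c' := by
  rw [exists_le_iff_of_sSup_eq (EReal.coe_toReal h (zoneBound_ne_bot hne c c')).symm]
  simp [canonicalConstraint, Holds]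

/-- Each constraint of a zone is downward closed in the difference it bounds, so `ν` lies in the
zone as soon as each of its differences is dominated by that of some point of the zone. -/
theorem IsZone.eq_setOf_canonical (hZ : IsZone Z) (hne : Z.Nonempty) :
    Z = {ν | extRef ν ∈ solutions (canonicalConstraints Z)} := by
  obtain ⟨B, hB⟩ := hZ.exists_eq_setOf_solutions
  have hdom : ∀ ν, extRef ν ∈ solutions (canonicalConstraints Z) ↔
      ∀ c c', ∃ ν' ∈ Z, extRef ν c - extRef ν c' ≤ extRef ν' c - extRef ν' c' := by
    intro ν
    simp only [canonicalConstraints, solutions, Set.forall_mem_image, Prod.forall]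
    refine forall₂_congr fun c c' => ?_
    by_cases h : zoneBound Z c c' = ⊤
    · simpa [h] using exists_le_of_sSup_eq_top h (extRef ν c - extRef ν c')
    · simp [h, holds_canonicalConstraint_iff hne h]
  ext ν
  rw [Set.mem_ofPred_eq, hdom]
  refine ⟨fun hν c c' => ⟨ν, hν, le_rfl⟩, fun h => ?_⟩
  rw [hB]
  intro b hb
  obtain ⟨ν', hν', hle⟩ := h b.left b.right
  have hν'B : ν' ∈ {ν | extRef ν ∈ solutions B} := hB ▸ hν'
  exact (hν'B b hb).of_sub_le hle

def readOff (e : Option (ClockT C) → V) (μ : V → ℝ) : ClockT C → ℝ :=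
  fun c => μ (e (some c)) - μ (e none)

theorem extRef_readOff (e : Option (ClockT C) → V) (μ : V → ℝ) :
    extRef (readOff e μ) = fun c => μ (e c) - μ (e none) := by
  funext c
  cases c <;> simp [extRef, readOff]

theorem holds_extRef_readOff {e : Option (ClockT C) → V} {μ : V → ℝ}
    {b : DiffConstraint (Option (ClockT C))} :
    b.Holds (extRef (readOff e μ)) ↔ (b.map e).Holds μ := by
  simp only [extRef_readOff, sub_eq_add_neg, holds_add_const, holds_map]
  rfl

def HasFinitePresentation (G : AddSubmonoid ℝ) (Z : Set (ClockT C → ℝ)) : Prop :=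
  ∃ (V : Type) (_ : Finite V) (A : Set (DiffConstraint V)) (e : Option (ClockT C) → V),
    A.Finite ∧ (∀ a ∈ A, a.bound ∈ G) ∧ Z = readOff e '' solutions A

namespace HasFinitePresentation

variable {G : AddSubmonoid ℝ}

theorem zoneBound_mem (h : HasFinitePresentation G Z) (hne : Z.Nonempty)
    (c c' : Option (ClockT C)) : zoneBound Z c c' ∈ G.withTop := by
  obtain ⟨V, _, A, e, hA, hG, rfl⟩ := h
  have hbound : zoneBound (readOff e '' solutions A) c c' =
      sSup ((fun μ => ((μ (e c) - μ (e c') : ℝ) : EReal)) '' solutions A) := by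
    simp only [zoneBound, Set.image_image, extRef_readOff, sub_sub_sub_cancel_right]
  rw [hbound]
  exact sSup_sub_mem_withTop hA hG hne.of_image (e c) (e c')

theorem inter (h : HasFinitePresentation G Z) (b : DiffConstraint (Option (ClockT C)))
    (hb : b.bound ∈ G) : HasFinitePresentation G (Z ∩ {ν | b.Holds (extRef ν)}) := by
  obtain ⟨V, _, A, e, hA, hG, rfl⟩ := h
  refine ⟨V, ‹_›, insert (b.map e) A, e, hA.insert _, Set.forall_mem_insert.2 ⟨hb, hG⟩, ?_⟩
  ext ν
  simp only [Set.mem_inter_iff, Set.mem_image, Set.mem_ofPred_eq, solutions,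
    Set.forall_mem_insert]
  constructor
  · rintro ⟨⟨μ, hμ, rfl⟩, hb⟩
    exact ⟨μ, ⟨holds_extRef_readOff.1 hb, hμ⟩, rfl⟩
  · rintro ⟨μ, ⟨hb, hμ⟩, rfl⟩
    exact ⟨⟨μ, hμ, rfl⟩, holds_extRef_readOff.2 hb⟩

theorem inter_cmp (h : HasFinitePresentation G Z) (op : CmpOp) (x y : Option (ClockT C)) (d : ℝ)
    (hd : (op.toConstraint x y d).bound ∈ G) :
    HasFinitePresentation G (Z ∩ {ν | op.eval (extRef ν x - extRef ν y) d}) := by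
  simpa only [CmpOp.holds_toConstraint] using h.inter _ hd

theorem inter_guardSat {H : AddSubgroup ℝ} (hH : ∀ n : ℕ, (n : ℝ) ∈ H)
    (h : HasFinitePresentation H.toAddSubmonoid Z) (g : Guard C) :
    HasFinitePresentation H.toAddSubmonoid (Z ∩ {ν | guardSat (fun c => ν (some c)) g}) := by
  induction g generalizing Z with
  | nil => simpa [guardSat] using h
  | cons p g ih =>
    have h' := ih (h.inter_cmp p.2.1 (some (some p.1)) none p.2.2
      (p.2.1.toConstraint_bound_mem _ _ (hH p.2.2)))
    convert h' using 1
    ext ν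
    simp [guardSat, extRef, and_assoc]

noncomputable def resetClock (ρ : Set C) : Option (ClockT C) → Option (ClockT C)
  | some (some c) => if c ∈ ρ then none else some (some c)
  | c => c

theorem symResetVal_readOff (e : Option (ClockT C) → V) (μ : V → ℝ) (ρ : Set C) :
    symResetVal (readOff e μ) ρ = readOff (e ∘ resetClock ρ) μ := by
  funext c
  rcases c with _ | c
  · rfl
  · by_cases hc : c ∈ ρ <;> simp [symResetVal, readOff, resetClock, hc]

theorem image_symResetVal (h : HasFinitePresentation G Z) (ρ : Set C) :
    HasFinitePresentation G ((fun ν => symResetVal ν ρ) '' Z) := by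
  obtain ⟨V, _, A, e, hA, hG, rfl⟩ := h
  refine ⟨V, ‹_›, A, e ∘ resetClock ρ, hA, hG, ?_⟩
  simp only [Set.image_image, symResetVal_readOff]

/-- Delaying all clocks by `τ` amounts to moving the reference point back by `τ`, so after time
elapse a fresh variable `none` serves as the reference. -/
def elapseClock (e : Option (ClockT C) → V) : Option (ClockT C) → Option V
  | none => none
  | some c => some (e (some c))

theorem upClosure (h : HasFinitePresentation G Z) : HasFinitePresentation G (upClosure Z) := by
  obtain ⟨V, _, A, e, hA, hG, rfl⟩ := h
  refine ⟨Option V, inferInstance, insert ⟨none, some (e none), 0, true⟩ (map some '' A),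
    elapseClock e, (hA.image _).insert _,
    Set.forall_mem_insert.2 ⟨G.zero_mem, Set.forall_mem_image.2 hG⟩, ?_⟩
  ext ν'
  constructor
  · rintro ⟨_, ⟨μ, hμ, rfl⟩, τ, hτ, rfl⟩
    refine ⟨fun v => v.elim (μ (e none) - τ) μ,
      Set.forall_mem_insert.2 ⟨?_, Set.forall_mem_image.2 hμ⟩, ?_⟩
    · simp [Holds, hτ]
    · funext c
      cases c <;> simp [readOff, elapseClock] <;> ring
  · rintro ⟨μ', hμ', rfl⟩
    obtain ⟨hτ, hμ⟩ := Set.forall_mem_insert.1 hμ'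
    refine ⟨readOff e (μ' ∘ some), ⟨μ' ∘ some, Set.forall_mem_image.1 hμ, rfl⟩,
      μ' (some (e none)) - μ' none, by simpa [Holds] using hτ, ?_⟩
    funext c
    cases c <;> simp [readOff, elapseClock]

end HasFinitePresentation

theorem IsZone.hasFinitePresentation [Finite C] {G : AddSubmonoid ℝ} (hZ : IsZone Z)
    (hne : Z.Nonempty) (hG : ∀ c c', zoneBound Z c c' ∈ G.withTop) :
    HasFinitePresentation G Z := by
  refine ⟨Option (ClockT C), inferInstance, canonicalConstraints Z, id,
    (Set.toFinite _).image _, ?_, ?_⟩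
  · rintro _ ⟨⟨c, c'⟩, hcc, rfl⟩
    obtain h | ⟨g, hg, h⟩ := hG c c'
    · exact absurd h hcc
    · simpa [canonicalConstraint, h] using hg
  · conv_lhs => rw [hZ.eq_setOf_canonical hne]
    ext ν
    constructor
    · intro hν
      exact ⟨extRef ν, hν, by funext c; simp [readOff, extRef]⟩
    · rintro ⟨μ, hμ, rfl⟩
      intro b hb
      exact holds_extRef_readOff.2 (hμ b hb)

end

section

variable {X L C : Type}

noncomputable def Signal.prefixCombination (σ : Signal X) : (ℕ → ℤ) →+ ℝ :=
  AddMonoidHom.mk' (fun k => (k 0 : ℝ) + ∑ i ∈ Finset.range σ.len, (k (i+1) : ℝ) * σ.pref (i+1))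
    (fun k k' => by simp only [Pi.add_apply, Int.cast_add, add_mul, Finset.sum_add_distrib]; ring)

noncomputable def Signal.timeGroup (σ : Signal X) : AddSubgroup ℝ := σ.prefixCombination.range

theorem Signal.natCast_mem_timeGroup (σ : Signal X) (n : ℕ) : (n : ℝ) ∈ σ.timeGroup :=
  ⟨Pi.single 0 (n : ℤ), by simp [prefixCombination]⟩

theorem Signal.pref_mem_timeGroup (σ : Signal X) {i : ℕ} (hi : i ≤ σ.len) :
    σ.pref i ∈ σ.timeGroup := by
  cases i with
  | zero => simp [pref, zero_mem]
  | succ i =>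
    refine ⟨Pi.single (i + 1) 1, ?_⟩
    simp [prefixCombination, Pi.single_apply, Finset.mem_range.2 hi]

theorem zoneBound_mem_of_symStep {σ : Signal X} {A : TSA X L C} [Finite C]
    {q q' : SymState X L C} (hstep : symStep σ A q q')
    (hq : ∀ c c', zoneBound q.2.1 c c' ∈ σ.timeGroup.toAddSubmonoid.withTop)
    (c c' : Option (ClockT C)) : zoneBound q'.2.1 c c' ∈ σ.timeGroup.toAddSubmonoid.withTop := by
  obtain ⟨⟨hZ, hne, -⟩, ⟨-, hne', -⟩, hcase⟩ := hstep
  have hP := hZ.hasFinitePresentation hne hq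
  have hpref : ∀ (op : CmpOp) (x y : Option (ClockT C)) {i}, i ≤ σ.len →
      (op.toConstraint x y (σ.pref i)).bound ∈ σ.timeGroup.toAddSubmonoid :=
    fun op x y _ hi => op.toConstraint_bound_mem x y (σ.pref_mem_timeGroup hi)
  refine HasFinitePresentation.zoneBound_mem ?_ hne' c c'
  rcases hcase with ⟨g, ρ, -, hZ', -, -⟩ | ⟨-, -, i, hi, hilen, hZ' | hZ'⟩ <;> rw [hZ']
  · convert (hP.inter_guardSat σ.natCast_mem_timeGroup g).image_symResetVal ρ using 1
    ext ν'
    simp [eq_comm, and_assoc]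
  · convert (hP.upClosure.inter_cmp .le (some none) none _ (hpref .le _ _ hilen)).inter_cmp
      .ge (some none) none _ (hpref .ge _ _ hilen) using 1
    ext ν
    simp [CmpOp.eval, extRef, le_antisymm_iff, and_assoc]
  · convert (hP.upClosure.inter_cmp .gt (some none) none (σ.pref (i - 1))
      (hpref .gt _ _ (by omega))).inter_cmp
      .lt (some none) none _ (hpref .lt _ _ hilen) using 1
    ext ν
    simp [CmpOp.eval, extRef, and_assoc]

theorem zoneBound_mem_of_mem_reach {σ : Signal X} {A : TSA X L C} [Finite C]
    {q : SymState X L C} (hq : q ∈ reach (symStep σ A) (symQ0 A)) (c c' : Option (ClockT C)) :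
    zoneBound q.2.1 c c' ∈ σ.timeGroup.toAddSubmonoid.withTop := by
  obtain ⟨q₀, ⟨-, hZ₀, -⟩, hreach⟩ := hq
  induction hreach generalizing c c' with
  | refl =>
    have h₀ : ∀ c : Option (ClockT C), extRef zeroValT c = 0 := by
      intro c
      cases c <;> rfl
    rw [hZ₀, zoneBound, Set.image_singleton, sSup_singleton, h₀, h₀, sub_zero]
    exact AddSubmonoid.coe_mem_withTop (zero_mem _)
  | tail _ hstep ih => exact zoneBound_mem_of_symStep hstep ih c c'

end

theorem statement4_general {X L C S : Type} [Finite C]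
    [CSemiring S] [CompleteCSemiring S]
    (W : TSWA X L C S) (σ : Signal X) :
    ∀ q ∈ reach (symStep σ W.toTSA) (symQ0 W.toTSA),
      ∀ c c' : Option (ClockT C),
        zoneBound q.2.1 c c' = ⊤ ∨
        ∃ k : ℕ → ℤ, zoneBound q.2.1 c c' =
          (((k 0 : ℝ) + ∑ i ∈ Finset.range σ.len, (k (i+1) : ℝ) * σ.pref (i+1) : ℝ) : EReal) := by
  intro q hq c c'
  obtain h | ⟨_, ⟨k, rfl⟩, h⟩ := zoneBound_mem_of_mem_reach hq c c'
  · exact Or.inl h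
  · exact Or.inr ⟨k, h⟩

/-- For every reachable symbolic state `(l,Z,ā)` of the WSTTS of
`σ = a₁^{τ₁}⋯a_n^{τ_n}` and `W`, and all `c,c' ∈ C⊔{T,0}`, the canonical zone bound
`d_{Z,c,c'}` is either `∞`, or of the form `k₀ + Σ_{i=1}^{n} kᵢ·(τ₁+⋯+τᵢ)` for some
integers `k₀,…,k_n`. -/
theorem statement4 {X L C S : Type} [Finite X] [Finite L] [Finite C]
    [CSemiring S] [CompleteCSemiring S]
    (W : TSWA X L C S) (σ : Signal X) :
    ∀ q ∈ reach (symStep σ W.toTSA) (symQ0 W.toTSA),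
      ∀ c c' : Option (ClockT C),
        zoneBound q.2.1 c c' = ⊤ ∨
        ∃ k : ℕ → ℤ, zoneBound q.2.1 c c' =
          (((k 0 : ℝ) + ∑ i ∈ Finset.range σ.len, (k (i+1) : ℝ) * σ.pref (i+1) : ℝ) : EReal) :=
  statement4_general W σ

end QTPM
end
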